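/- arXiv:2312.07890 — 10 statements merged into one kernel-verified Lean document; each statement's English description precedes it below -/
import Mathlib

section
/- Let n ≥ 3, let a, k be integers, and let x = (x_1,…,x_n) ∈ ℤ^n be a solution of the Markoff–Hurwitz equation such that for every choice of indices 1 ≤ i_1 < ⋯ < i_{n−2} ≤ n one has |a·x_{i_1}⋯x_{i_{n−2}}| > 2. If for some index i we have |a·(∏_{j≠i} x_j) − x_i| ≤ |x_i|, then |x_j| < |x_i| for all j ≠ i. -/
open Finset

/-- The set of integer solutions of the Markoff–Hurwitz equation
`x₁² + ⋯ + xₙ² − a·x₁⋯xₙ = k`. -/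
def mhSol (n : ℕ) (a k : ℤ) : Set (Fin n → ℤ) :=
  {x | ∑ i, x i ^ 2 - a * ∏ i, x i = k}

/-- The Vieta involution at index `i`: replaces `x i` with `a·(∏_{j ≠ i} x j) − x i`. -/
def mhVieta (n : ℕ) (a : ℤ) (i : Fin n) (x : Fin n → ℤ) : Fin n → ℤ :=
  Function.update x i (a * ∏ j ∈ Finset.univ.erase i, x j - x i)

/-- The double sign change at indices `s, t`. -/
def mhSign (n : ℕ) (s t : Fin n) (x : Fin n → ℤ) : Fin n → ℤ :=
  fun j => if j = s ∨ j = t then -x j else x j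

/-- The permutation action `σ(x) = (x_{σ(1)}, …, x_{σ(n)})`. -/
def mhPerm (n : ℕ) (σ : Equiv.Perm (Fin n)) (x : Fin n → ℤ) : Fin n → ℤ :=
  fun i => x (σ i)

/-- The group `Γ_{a,n}` of bijections of `ℤⁿ` generated by the Vieta involutions,
the double sign changes, and the permutations. -/
def mhGamma (n : ℕ) (a : ℤ) : Subgroup (Equiv.Perm (Fin n → ℤ)) :=
  Subgroup.closure {e : Equiv.Perm (Fin n → ℤ) |
    (∃ i : Fin n, ∀ x, e x = mhVieta n a i x) ∨
    (∃ s t : Fin n, s < t ∧ ∀ x, e x = mhSign n s t x) ∨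
    (∃ σ : Equiv.Perm (Fin n), ∀ x, e x = mhPerm n σ x)}

/-- The height function `Δ(x) = |x₁| + ⋯ + |xₙ|`. -/
def mhDelta (n : ℕ) (x : Fin n → ℤ) : ℤ := ∑ i, |x i|

/-- if all products of `n − 2` of the coordinates (times `a`) exceed `2`
in absolute value, and the Vieta move at `i` does not increase `|x i|`, then `x i`
strictly dominates all other coordinates in absolute value. -/
theorem mh_domination (n : ℕ) (hn : 3 ≤ n) (a k : ℤ) (x : Fin n → ℤ)
    (hx : x ∈ mhSol n a k)
    (hbig : ∀ s : Finset (Fin n), s.card = n - 2 → 2 < |a * ∏ j ∈ s, x j|)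
    (i : Fin n) (hi : |a * ∏ j ∈ Finset.univ.erase i, x j - x i| ≤ |x i|) :
    ∀ j : Fin n, j ≠ i → |x j| < |x i| := by
  have h2 : |a * ∏ m ∈ Finset.univ.erase i, x m| ≤ 2 * |x i| := by
    have := abs_add_le (a * ∏ m ∈ Finset.univ.erase i, x m - x i) (x i)
    simp only [sub_add_cancel] at this
    linarith [abs_nonneg (x i)]
  have key : ∀ m : Fin n, m ≠ i → 3 * |x m| ≤ 2 * |x i| := by
    intro m hm
    have hmu : m ∈ Finset.univ.erase i := Finset.mem_erase.2 ⟨hm, Finset.mem_univ m⟩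
    have hP : x m * ∏ l ∈ (Finset.univ.erase i).erase m, x l
        = ∏ l ∈ Finset.univ.erase i, x l := Finset.mul_prod_erase _ _ hmu
    have hcard : ((Finset.univ.erase i).erase m).card = n - 2 := by
      rw [Finset.card_erase_of_mem hmu, Finset.card_erase_of_mem (Finset.mem_univ i),
        Finset.card_univ, Fintype.card_fin]
      omega
    have h3 : 2 < |a * ∏ l ∈ (Finset.univ.erase i).erase m, x l| := hbig _ hcard
    have h3' : 3 ≤ |a * ∏ l ∈ (Finset.univ.erase i).erase m, x l| := h3
    calc 3 * |x m| ≤ |a * ∏ l ∈ (Finset.univ.erase i).erase m, x l| * |x m| :=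
          mul_le_mul_of_nonneg_right h3' (abs_nonneg _)
      _ = |a * ∏ l ∈ Finset.univ.erase i, x l| := by
          rw [← abs_mul, ← hP]; ring_nf
      _ ≤ 2 * |x i| := h2
  have hxi : x i ≠ 0 := by
    intro h0
    obtain ⟨t, ht, htc⟩ := Finset.exists_subset_card_eq
      (s := Finset.univ.erase i) (n := n - 2) (by
        rw [Finset.card_erase_of_mem (Finset.mem_univ i), Finset.card_univ,
          Fintype.card_fin]
        omega)
    have htne : t.Nonempty := Finset.card_pos.1 (by omega)
    obtain ⟨m, hmt⟩ := htne
    have hmi : m ≠ i := (Finset.mem_erase.1 (ht hmt)).1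
    have hzm : x m = 0 := by
      have := key m hmi
      rw [h0] at this
      simp only [abs_zero, mul_zero] at this
      have := abs_nonneg (x m)
      have : |x m| = 0 := le_antisymm (by linarith) (abs_nonneg _)
      exact abs_eq_zero.1 this
    have : ∏ l ∈ t, x l = 0 := Finset.prod_eq_zero hmt hzm
    have hb := hbig t htc
    rw [this, mul_zero, abs_zero] at hb
    omega
  intro j hj
  have hk := key j hj
  have hpos : 0 < |x i| := abs_pos.2 hxi
  by_contra h
  push_neg at h
  linarith
end

section
/- Let n ≥ 3, let k be an integer and let b, c be integers with 1 ≤ b < c such that x = (1,…,1,b,c) (first n−2 coordinates equal to 1) is a solution of the Markoff–Hurwitz equation with a = 1. Then 𝒱_{1,n,n}(x) = (1,…,1,b,b−c), Δ(𝒱_{1,n,n}(x)) = Δ(x) − b < Δ(x), and applying the double sign change 𝒮_{n,1,n} to 𝒱_{1,n,n}(x) yields (−1,1,…,1,b,c−b), which is again a solution of V_{1,k,n}. -/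
open Finset

lemma mh_sum_split3 {n : ℕ} (hn : 3 ≤ n) (f : Fin n → ℤ)
    (hone : ∀ j : Fin n, (j : ℕ) ≠ n - 1 → (j : ℕ) ≠ n - 2 → (j : ℕ) ≠ 0 → f j = 1) :
    ∑ i, f i = f ⟨n - 1, by omega⟩ + f ⟨n - 2, by omega⟩ + f ⟨0, by omega⟩ + ((n : ℤ) - 3) := by
  have m2 : (⟨n - 2, by omega⟩ : Fin n) ∈ univ.erase (⟨n - 1, by omega⟩ : Fin n) := by
    simp [Finset.mem_erase, Fin.ext_iff]; omega
  have m3 : (⟨0, by omega⟩ : Fin n) ∈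
      (univ.erase (⟨n - 1, by omega⟩ : Fin n)).erase (⟨n - 2, by omega⟩ : Fin n) := by
    simp [Finset.mem_erase, Fin.ext_iff]; omega
  rw [← Finset.add_sum_erase _ f (Finset.mem_univ (⟨n - 1, by omega⟩ : Fin n)),
      ← Finset.add_sum_erase _ f m2, ← Finset.add_sum_erase _ f m3]
  have hrest : ∑ j ∈ (((univ.erase (⟨n - 1, by omega⟩ : Fin n)).erase
      (⟨n - 2, by omega⟩ : Fin n)).erase (⟨0, by omega⟩ : Fin n)), f j = (n : ℤ) - 3 := by
    have h1 : ∑ j ∈ (((univ.erase (⟨n - 1, by omega⟩ : Fin n)).erase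
        (⟨n - 2, by omega⟩ : Fin n)).erase (⟨0, by omega⟩ : Fin n)), f j
        = ∑ _j ∈ (((univ.erase (⟨n - 1, by omega⟩ : Fin n)).erase
        (⟨n - 2, by omega⟩ : Fin n)).erase (⟨0, by omega⟩ : Fin n)), (1 : ℤ) := by
      refine Finset.sum_congr rfl fun j hj => ?_
      simp [Finset.mem_erase, Fin.ext_iff] at hj
      exact hone j hj.2.2 hj.2.1 hj.1
    rw [h1, Finset.sum_const, Finset.card_erase_of_mem m3, Finset.card_erase_of_mem m2,
        Finset.card_erase_of_mem (Finset.mem_univ _), Finset.card_univ, Fintype.card_fin]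
    simp only [nsmul_eq_mul, mul_one]
    omega
  rw [hrest]; ring

lemma mh_prod_split3 {n : ℕ} (hn : 3 ≤ n) (f : Fin n → ℤ)
    (hone : ∀ j : Fin n, (j : ℕ) ≠ n - 1 → (j : ℕ) ≠ n - 2 → (j : ℕ) ≠ 0 → f j = 1) :
    ∏ i, f i = f ⟨n - 1, by omega⟩ * f ⟨n - 2, by omega⟩ * f ⟨0, by omega⟩ := by
  have m2 : (⟨n - 2, by omega⟩ : Fin n) ∈ univ.erase (⟨n - 1, by omega⟩ : Fin n) := by
    simp [Finset.mem_erase, Fin.ext_iff]; omega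
  have m3 : (⟨0, by omega⟩ : Fin n) ∈
      (univ.erase (⟨n - 1, by omega⟩ : Fin n)).erase (⟨n - 2, by omega⟩ : Fin n) := by
    simp [Finset.mem_erase, Fin.ext_iff]; omega
  rw [← Finset.mul_prod_erase _ f (Finset.mem_univ (⟨n - 1, by omega⟩ : Fin n)),
      ← Finset.mul_prod_erase _ f m2, ← Finset.mul_prod_erase _ f m3]
  have hrest : ∏ j ∈ (((univ.erase (⟨n - 1, by omega⟩ : Fin n)).erase
      (⟨n - 2, by omega⟩ : Fin n)).erase (⟨0, by omega⟩ : Fin n)), f j = 1 := by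
    refine Finset.prod_eq_one fun j hj => ?_
    simp [Finset.mem_erase, Fin.ext_iff] at hj
    exact hone j hj.2.2 hj.2.1 hj.1
  rw [hrest]; ring


set_option maxHeartbeats 1000000 in
/-- for `x = (1,…,1,b,c)` with `1 ≤ b < c` a solution with `a = 1`,
the Vieta move at the last index yields `(1,…,1,b,b−c)`, decreases the height by `b`,
and the double sign change at indices `1, n` then yields the solution `(−1,1,…,1,b,c−b)`. -/
theorem mh_descend_strict_case (n : ℕ) (hn : 3 ≤ n) (k b c : ℤ) (hb : 1 ≤ b) (hbc : b < c)
    (x : Fin n → ℤ)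
    (hxdef : ∀ i : Fin n, x i =
      if i.val = n - 1 then c else if i.val = n - 2 then b else 1)
    (hx : x ∈ mhSol n 1 k) :
    (∀ i : Fin n, mhVieta n 1 ⟨n - 1, by omega⟩ x i =
        if i.val = n - 1 then b - c else if i.val = n - 2 then b else 1) ∧
    mhDelta n (mhVieta n 1 ⟨n - 1, by omega⟩ x) = mhDelta n x - b ∧
    mhDelta n (mhVieta n 1 ⟨n - 1, by omega⟩ x) < mhDelta n x ∧
    (∀ i : Fin n, mhSign n ⟨0, by omega⟩ ⟨n - 1, by omega⟩
        (mhVieta n 1 ⟨n - 1, by omega⟩ x) i =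
        if i.val = 0 then -1 else if i.val = n - 1 then c - b
          else if i.val = n - 2 then b else 1) ∧
    mhSign n ⟨0, by omega⟩ ⟨n - 1, by omega⟩ (mhVieta n 1 ⟨n - 1, by omega⟩ x)
      ∈ mhSol n 1 k := by
  have hxoff : ∀ j : Fin n, (j : ℕ) ≠ n - 1 → (j : ℕ) ≠ n - 2 → x j = 1 := by
    intro j h1 h2; rw [hxdef j, if_neg h1, if_neg h2]
  have hxi1 : x ⟨n - 1, by omega⟩ = c := by
    rw [hxdef, if_pos (show ((⟨n - 1, by omega⟩ : Fin n)).val = n - 1 from rfl)]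
  have hxi2 : x ⟨n - 2, by omega⟩ = b := by
    rw [hxdef, if_neg (show ¬((n : ℕ) - 2 = n - 1) by omega),
        if_pos (show ((⟨n - 2, by omega⟩ : Fin n)).val = n - 2 from rfl)]
  have hxi3 : x ⟨0, by omega⟩ = 1 :=
    hxoff _ (show ¬((0 : ℕ) = n - 1) by omega) (show ¬((0 : ℕ) = n - 2) by omega)
  have m2 : (⟨n - 2, by omega⟩ : Fin n) ∈ univ.erase (⟨n - 1, by omega⟩ : Fin n) := by
    simp [Finset.mem_erase, Fin.ext_iff]; omega
  have hB : ∏ j ∈ univ.erase (⟨n - 1, by omega⟩ : Fin n), x j = b := by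
    rw [← Finset.mul_prod_erase _ x m2, hxi2]
    have h1 : ∏ j ∈ (univ.erase (⟨n - 1, by omega⟩ : Fin n)).erase (⟨n - 2, by omega⟩ : Fin n),
        x j = 1 := by
      refine Finset.prod_eq_one fun j hj => ?_
      simp [Finset.mem_erase, Fin.ext_iff] at hj
      exact hxoff j hj.2 hj.1
    rw [h1]; ring
  obtain ⟨y, hy⟩ : ∃ y : Fin n → ℤ, mhVieta n 1 ⟨n - 1, by omega⟩ x = y := ⟨_, rfl⟩
  rw [hy]
  have h1 : ∀ i : Fin n, y i =
      if i.val = n - 1 then b - c else if i.val = n - 2 then b else 1 := by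
    intro i
    rw [← hy]
    simp only [mhVieta, hB, hxi1, Function.update_apply]
    by_cases hi : i = (⟨n - 1, by omega⟩ : Fin n)
    · rw [if_pos hi, if_pos (show i.val = n - 1 by rw [hi])]; ring
    · have hv : (i : ℕ) ≠ n - 1 := fun h => hi (Fin.ext h)
      rw [if_neg hi, if_neg hv, hxdef i, if_neg hv]
  clear hy
  have hy1 : y ⟨n - 1, by omega⟩ = b - c := by
    rw [h1, if_pos (show ((⟨n - 1, by omega⟩ : Fin n)).val = n - 1 from rfl)]
  have hy2 : y ⟨n - 2, by omega⟩ = b := by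
    rw [h1, if_neg (show ¬((n : ℕ) - 2 = n - 1) by omega),
        if_pos (show ((⟨n - 2, by omega⟩ : Fin n)).val = n - 2 from rfl)]
  have hy3 : y ⟨0, by omega⟩ = 1 := by
    rw [h1, if_neg (show ¬((0 : ℕ) = n - 1) by omega),
        if_neg (show ¬((0 : ℕ) = n - 2) by omega)]
  have hyoff : ∀ j : Fin n, (j : ℕ) ≠ n - 1 → (j : ℕ) ≠ n - 2 → y j = 1 := by
    intro j hj1 hj2; rw [h1, if_neg hj1, if_neg hj2]
  have hΔy : mhDelta n y = (c - b) + b + 1 + ((n : ℤ) - 3) := by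
    rw [mhDelta, mh_sum_split3 hn (fun i => |y i|)
      (fun j hj1 hj2 _ => by simp only [hyoff j hj1 hj2]; simp)]
    simp only [hy1, hy2, hy3]
    rw [abs_of_neg (by omega : b - c < 0), abs_of_pos (by omega : (0:ℤ) < b)]
    norm_num
  have hΔx : mhDelta n x = c + b + 1 + ((n : ℤ) - 3) := by
    rw [mhDelta, mh_sum_split3 hn (fun i => |x i|)
      (fun j hj1 hj2 _ => by simp only [hxoff j hj1 hj2]; simp)]
    simp only [hxi1, hxi2, hxi3]
    rw [abs_of_pos (by omega : (0:ℤ) < c), abs_of_pos (by omega : (0:ℤ) < b)]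
    norm_num
  obtain ⟨z, hz⟩ : ∃ z : Fin n → ℤ,
      mhSign n ⟨0, by omega⟩ ⟨n - 1, by omega⟩ y = z := ⟨_, rfl⟩
  rw [hz]
  have h4 : ∀ i : Fin n, z i =
      if i.val = 0 then -1 else if i.val = n - 1 then c - b
        else if i.val = n - 2 then b else 1 := by
    intro i
    rw [← hz]
    simp only [mhSign, h1, Fin.ext_iff]
    split_ifs <;> omega
  clear hz
  have hz1 : z ⟨n - 1, by omega⟩ = c - b := by
    rw [h4, if_neg (show ¬((n : ℕ) - 1 = 0) by omega),
        if_pos (show ((⟨n - 1, by omega⟩ : Fin n)).val = n - 1 from rfl)]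
  have hz2 : z ⟨n - 2, by omega⟩ = b := by
    rw [h4, if_neg (show ¬((n : ℕ) - 2 = 0) by omega),
        if_neg (show ¬((n : ℕ) - 2 = n - 1) by omega),
        if_pos (show ((⟨n - 2, by omega⟩ : Fin n)).val = n - 2 from rfl)]
  have hz3 : z ⟨0, by omega⟩ = -1 := by
    rw [h4, if_pos (show ((⟨0, by omega⟩ : Fin n)).val = 0 from rfl)]
  have hzoff : ∀ j : Fin n, (j : ℕ) ≠ n - 1 → (j : ℕ) ≠ n - 2 → (j : ℕ) ≠ 0 → z j = 1 := by
    intro j hj1 hj2 hj3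
    rw [h4, if_neg hj3, if_neg hj1, if_neg hj2]
  refine ⟨h1, by omega, by omega, h4, ?_⟩
  simp only [mhSol, Set.mem_setOf_eq] at hx ⊢
  rw [mh_sum_split3 hn (fun i => x i ^ 2)
        (fun j hj1 hj2 _ => by simp only [hxoff j hj1 hj2]; ring),
      mh_prod_split3 hn x (fun j hj1 hj2 _ => hxoff j hj1 hj2), hxi1, hxi2, hxi3] at hx
  rw [mh_sum_split3 hn (fun i => z i ^ 2)
        (fun j hj1 hj2 hj3 => by simp only [hzoff j hj1 hj2 hj3]; ring),
      mh_prod_split3 hn z hzoff, hz1, hz2, hz3]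
  linear_combination hx
end

section
/- Let n ≥ 3, let k be an integer and let b, c be integers with 1 ≤ b ≤ c such that x = (−1,1,…,1,b,c) (first coordinate −1, next n−3 coordinates equal to 1) is a solution of the Markoff–Hurwitz equation with a = 1. Then Δ(𝒱_{1,n,i}(x)) > Δ(x) for every i = 1,…,n; that is, x is a last vertex: every Vieta involution strictly increases the height. -/
open Finset

/-- for `x = (−1,1,…,1,b,c)` with `1 ≤ b ≤ c` a solution with `a = 1`,
every Vieta involution strictly increases the height (`x` is a last vertex). -/
theorem mh_last_vertex_a1 (n : ℕ) (hn : 3 ≤ n) (k b c : ℤ) (hb : 1 ≤ b) (hbc : b ≤ c)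
    (x : Fin n → ℤ)
    (hxdef : ∀ i : Fin n, x i = if i.val = 0 then -1
      else if i.val = n - 2 then b else if i.val = n - 1 then c else 1)
    (hx : x ∈ mhSol n 1 k) :
    ∀ i : Fin n, mhDelta n x < mhDelta n (mhVieta n 1 i x) := by
  have hc : 1 ≤ c := le_trans hb hbc
  have hbcpos : (0:ℤ) < b * c := mul_pos (by linarith) (by linarith)
  set i0 : Fin n := ⟨0, by omega⟩ with hi0def
  set i1 : Fin n := ⟨n - 2, by omega⟩ with hi1def
  set i2 : Fin n := ⟨n - 1, by omega⟩ with hi2def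
  have h01 : i0 ≠ i1 := by simp [hi0def, hi1def, Fin.ext_iff]; omega
  have h02 : i0 ≠ i2 := by simp [hi0def, hi2def, Fin.ext_iff]; omega
  have h12 : i1 ≠ i2 := by simp [hi1def, hi2def, Fin.ext_iff]; omega
  have hP : ∏ j, x j = -(b * c) := by
    have hs : ({i0, i1, i2} : Finset (Fin n)) ⊆ Finset.univ := Finset.subset_univ _
    rw [← Finset.prod_sdiff hs]
    have h1 : ∏ j ∈ Finset.univ \ {i0, i1, i2}, x j = 1 := by
      apply Finset.prod_eq_one
      intro j hj
      simp only [Finset.mem_sdiff, Finset.mem_insert, Finset.mem_singleton] at hj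
      push_neg at hj
      obtain ⟨-, hj0, hj1, hj2⟩ := hj
      have hj0' : (j:ℕ) ≠ 0 := by simpa [hi0def, Fin.ext_iff] using hj0
      have hj1' : (j:ℕ) ≠ n - 2 := by simpa [hi1def, Fin.ext_iff] using hj1
      have hj2' : (j:ℕ) ≠ n - 1 := by simpa [hi2def, Fin.ext_iff] using hj2
      rw [hxdef j, if_neg hj0', if_neg hj1', if_neg hj2']
    rw [h1, one_mul]
    rw [Finset.prod_insert (by simp [h01, h02]),
        Finset.prod_insert (by simp [h12]), Finset.prod_singleton]
    rw [hxdef i0, hxdef i1, hxdef i2]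
    simp only [hi0def, hi1def, hi2def, if_true,
      if_neg (show ¬ n - 2 = 0 by omega), if_neg (show ¬ n - 1 = 0 by omega),
      if_neg (show ¬ n - 1 = n - 2 by omega)]
    ring
  intro i
  have hprod : x i * ∏ j ∈ Finset.univ.erase i, x j = -(b * c) := by
    rw [Finset.mul_prod_erase _ _ (Finset.mem_univ i), hP]
  have hred : mhDelta n (mhVieta n 1 i x)
      = |1 * ∏ j ∈ Finset.univ.erase i, x j - x i| + ∑ j ∈ Finset.univ.erase i, |x j| := by
    unfold mhDelta mhVieta
    rw [← Finset.add_sum_erase _ _ (Finset.mem_univ i)]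
    congr 1
    · rw [Function.update_self]
    · exact Finset.sum_congr rfl fun j hj => by
        rw [Function.update_of_ne (Finset.ne_of_mem_erase hj)]
  have hred2 : mhDelta n x = |x i| + ∑ j ∈ Finset.univ.erase i, |x j| := by
    unfold mhDelta
    rw [← Finset.add_sum_erase _ _ (Finset.mem_univ i)]
  rw [hred, hred2]
  have key : |x i| < |1 * ∏ j ∈ Finset.univ.erase i, x j - x i| := by
    rw [one_mul]
    by_cases hv0 : i.val = 0
    · have hxi : x i = -1 := by rw [hxdef i, if_pos hv0]
      rw [hxi] at hprod ⊢
      have hpe : ∏ j ∈ Finset.univ.erase i, x j = b * c := by linarith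
      rw [show |(-1:ℤ)| = 1 by norm_num, hpe]
      exact lt_of_lt_of_le (by nlinarith : (1:ℤ) < b * c - -1) (le_abs_self _)
    · by_cases hv1 : i.val = n - 2
      · have hxi : x i = b := by rw [hxdef i, if_neg hv0, if_pos hv1]
        rw [hxi] at hprod ⊢
        have hpe : ∏ j ∈ Finset.univ.erase i, x j = -c := by
          have heq : b * ∏ j ∈ Finset.univ.erase i, x j = b * (-c) := by
            rw [hprod]; ring
          exact mul_left_cancel₀ (ne_of_gt (show (0:ℤ) < b by linarith)) heq
        rw [hpe, show -c - b = -(b + c) by ring, abs_neg,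
            abs_of_pos (by linarith : (0:ℤ) < b), abs_of_pos (by linarith)]
        linarith
      · by_cases hv2 : i.val = n - 1
        · have hxi : x i = c := by rw [hxdef i, if_neg hv0, if_neg hv1, if_pos hv2]
          rw [hxi] at hprod ⊢
          have hpe : ∏ j ∈ Finset.univ.erase i, x j = -b := by
            have heq : c * ∏ j ∈ Finset.univ.erase i, x j = c * (-b) := by
              rw [hprod]; ring
            exact mul_left_cancel₀ (ne_of_gt (show (0:ℤ) < c by linarith)) heq
          rw [hpe, show -b - c = -(b + c) by ring, abs_neg,
              abs_of_pos (by linarith : (0:ℤ) < c), abs_of_pos (by linarith)]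
          linarith
        · have hxi : x i = 1 := by
            rw [hxdef i, if_neg hv0, if_neg hv1, if_neg hv2]
          rw [hxi] at hprod ⊢
          have hpe : ∏ j ∈ Finset.univ.erase i, x j = -(b * c) := by linarith
          rw [abs_one, hpe]
          exact lt_of_lt_of_le (by nlinarith : (1:ℤ) < -(-(b * c) - 1)) (neg_le_abs _)
  linarith
end

section
/- Let n ≥ 3, let a > 0 and k be integers, and let x = (x_1,…,x_n) ∈ ℤ^n be a solution of the Markoff–Hurwitz equation with 0 < x_1 ≤ x_2 ≤ ⋯ ≤ x_n, a·x_1⋯x_{n−2} > 2, and 2x_n ≤ a·x_1⋯x_{n−1}. Then Δ(𝒱_{a,n,i}(x)) > Δ(x) for every i < n, and Δ(𝒱_{a,n,n}(x)) ≥ Δ(x). -/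
open Finset

/-- for a reduced positive solution (increasing, `a·x₁⋯x_{n−2} > 2`,
`2xₙ ≤ a·x₁⋯x_{n−1}`), the Vieta moves at indices `i < n` strictly increase the height,
and the Vieta move at the last index does not decrease it. -/
theorem mh_positive_reduced (n : ℕ) (hn : 3 ≤ n) (a k : ℤ) (ha : 0 < a)
    (x : Fin n → ℤ) (hx : x ∈ mhSol n a k)
    (hpos : 0 < x ⟨0, by omega⟩) (hmono : Monotone x)
    (hbig : 2 < a * ∏ j ∈ Finset.univ.filter (fun j : Fin n => j.val < n - 2), x j)
    (hlast : 2 * x ⟨n - 1, by omega⟩ ≤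
      a * ∏ j ∈ Finset.univ.filter (fun j : Fin n => j.val < n - 1), x j) :
    (∀ i : Fin n, i.val < n - 1 → mhDelta n x < mhDelta n (mhVieta n a i x)) ∧
    mhDelta n x ≤ mhDelta n (mhVieta n a ⟨n - 1, by omega⟩ x) := by
  have hm1 : n - 1 < n := by omega
  have hm2 : n - 2 < n := by omega
  set m : Fin n := ⟨n - 1, hm1⟩ with hmdef
  set e : Fin n := ⟨n - 2, hm2⟩ with hedef
  have hposall : ∀ j : Fin n, 0 < x j := by
    intro j
    exact lt_of_lt_of_le hpos (hmono (by simp [Fin.le_def]))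
  have hxle : ∀ {i j : Fin n}, i.val ≤ j.val → x i ≤ x j :=
    fun h => hmono (Fin.le_def.mpr h)
  have hvm : (m : ℕ) = n - 1 := rfl
  have hve : (e : ℕ) = n - 2 := rfl
  have hBeq : univ.filter (fun j : Fin n => j.val < n - 1) = univ.erase m := by
    ext j
    simp only [mem_filter, mem_erase, mem_univ, true_and, and_true, Fin.ext_iff]
    omega
  have hTeq : univ.filter (fun j : Fin n => j.val < n - 2) = (univ.erase m).erase e := by
    ext j
    simp only [mem_filter, mem_erase, mem_univ, true_and, and_true, Fin.ext_iff]
    omega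
  have hQpos : ∀ s : Finset (Fin n), 0 < ∏ j ∈ s, x j :=
    fun s => Finset.prod_pos (fun j _ => hposall j)
  have delta_split : ∀ i : Fin n, mhDelta n x = |x i| + ∑ j ∈ univ.erase i, |x j| := by
    intro i
    rw [mhDelta, ← Finset.add_sum_erase _ _ (mem_univ i)]
  have delta_upd : ∀ (i : Fin n) (v : ℤ),
      mhDelta n (Function.update x i v) = |v| + ∑ j ∈ univ.erase i, |x j| := by
    intro i v
    rw [mhDelta, ← Finset.add_sum_erase _ _ (mem_univ i), Function.update_self]
    congr 1
    exact Finset.sum_congr rfl fun j hj => by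
      rw [Function.update_of_ne (Finset.ne_of_mem_erase hj)]
  have key : ∀ i : Fin n, i.val < n - 1 → 2 * x i < a * ∏ j ∈ univ.erase i, x j := by
    intro i hi
    have him : i ≠ m := by intro h; have := congrArg Fin.val h; omega
    have hmA : m ∈ univ.erase i := Finset.mem_erase.mpr ⟨him.symm, mem_univ m⟩
    have h1 : ∏ j ∈ univ.erase i, x j = x m * ∏ j ∈ (univ.erase m).erase i, x j := by
      rw [← Finset.mul_prod_erase _ _ hmA, Finset.erase_right_comm]
    have hiB : i ∈ univ.erase m := Finset.mem_erase.mpr ⟨him, mem_univ i⟩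
    have heB : e ∈ univ.erase m :=
      Finset.mem_erase.mpr ⟨by intro h; have := congrArg Fin.val h; omega, mem_univ e⟩
    have h2 : x i * ∏ j ∈ (univ.erase m).erase i, x j
        = x e * ∏ j ∈ (univ.erase m).erase e, x j := by
      rw [Finset.mul_prod_erase _ _ hiB, Finset.mul_prod_erase _ _ heB]
    have hxie : x i ≤ x e := hxle (by omega)
    have h3 : ∏ j ∈ (univ.erase m).erase e, x j ≤ ∏ j ∈ (univ.erase m).erase i, x j := by
      nlinarith [hQpos ((univ.erase m).erase e), hQpos ((univ.erase m).erase i),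
        hposall i, hposall e]
    have hbig' : 3 ≤ a * ∏ j ∈ (univ.erase m).erase e, x j := by
      rw [hTeq] at hbig; omega
    have hQ3 : 3 ≤ a * ∏ j ∈ (univ.erase m).erase i, x j := by
      have := mul_le_mul_of_nonneg_left h3 ha.le
      linarith
    have hxm : x i ≤ x m := hxle (by omega)
    rw [h1]
    nlinarith [hposall i, hposall m, hQ3, hxm]
  constructor
  · intro i hi
    have hk := key i hi
    rw [mhVieta, delta_upd, delta_split i]
    have hlt : |x i| < |a * ∏ j ∈ univ.erase i, x j - x i| := by
      rw [abs_of_pos (hposall i), abs_of_pos (by linarith [hposall i])]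
      linarith [hposall i]
    linarith
  · have hk : 2 * x m ≤ a * ∏ j ∈ univ.erase m, x j := by
      rw [hBeq] at hlast; exact hlast
    rw [mhVieta, delta_upd, delta_split m]
    have hle : |x m| ≤ |a * ∏ j ∈ univ.erase m, x j - x m| := by
      rw [abs_of_pos (hposall m), abs_of_pos (by linarith [hposall m])]
      linarith
    linarith
end

section
/- Let n ≥ 3 (for the displayed tuple assume n ≥ 4 so that a coordinate equal to 2 appears before the last two), let k be an integer, and let b, c be integers with 2 ≤ b ≤ c such that x = (−1,1,…,1,2,b,c) (first coordinate −1, then n−4 coordinates equal to 1, then 2, b, c) is a solution of the Markoff–Hurwitz equation with a = 1. Then Δ(𝒱_{1,n,i}(x)) > Δ(x) for every i = 1,…,n. -/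
open Finset

/-- for `x = (−1,1,…,1,2,b,c)` with `2 ≤ b ≤ c` a solution with `a = 1`
(here `n ≥ 4`), every Vieta involution strictly increases the height. -/
theorem mh_last_vertex_S2_a1 (n : ℕ) (hn : 4 ≤ n) (k b c : ℤ) (hb : 2 ≤ b) (hbc : b ≤ c)
    (x : Fin n → ℤ)
    (hxdef : ∀ i : Fin n, x i = if i.val = 0 then -1
      else if i.val = n - 3 then 2 else if i.val = n - 2 then b
      else if i.val = n - 1 then c else 1)
    (hx : x ∈ mhSol n 1 k) :
    ∀ i : Fin n, mhDelta n x < mhDelta n (mhVieta n 1 i x) := by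

  intro i
  have hc : 2 ≤ c := le_trans hb hbc
  -- special indices
  have h0 : 0 < n := by omega
  have h1 : n - 3 < n := by omega
  have h2 : n - 2 < n := by omega
  have h3 : n - 1 < n := by omega
  set i0 : Fin n := ⟨0, h0⟩ with hi0
  set i1 : Fin n := ⟨n - 3, h1⟩ with hi1
  set i2 : Fin n := ⟨n - 2, h2⟩ with hi2
  set i3 : Fin n := ⟨n - 1, h3⟩ with hi3
  have hne01 : i0 ≠ i1 := by simp [hi0, hi1, Fin.ext_iff]; omega
  have hne02 : i0 ≠ i2 := by simp [hi0, hi2, Fin.ext_iff]; omega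
  have hne03 : i0 ≠ i3 := by simp [hi0, hi3, Fin.ext_iff]; omega
  have hne12 : i1 ≠ i2 := by simp [hi1, hi2, Fin.ext_iff]; omega
  have hne13 : i1 ≠ i3 := by simp [hi1, hi3, Fin.ext_iff]; omega
  have hne23 : i2 ≠ i3 := by simp [hi2, hi3, Fin.ext_iff]; omega
  have hx0 : x i0 = -1 := by rw [hxdef]; simp [hi0]
  have hx1 : x i1 = 2 := by
    rw [hxdef]; rw [if_neg (by simp [hi1]; omega), if_pos rfl]
  have hx2 : x i2 = b := by
    rw [hxdef]
    rw [if_neg (by simp [hi2]; omega), if_neg (by simp [hi2]; omega), if_pos rfl]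
  have hx3 : x i3 = c := by
    rw [hxdef]
    rw [if_neg (by simp [hi3]; omega), if_neg (by simp [hi3]; omega),
      if_neg (by simp [hi3]; omega), if_pos rfl]
  -- the full product
  set S : Finset (Fin n) := {i0, i1, i2, i3} with hS
  have hprod : ∏ j, x j = -2 * b * c := by
    rw [← Finset.prod_subset (Finset.subset_univ S) (fun j _ hj => ?_)]
    · rw [hS, Finset.prod_insert (by simp [hne01, hne02, hne03]),
        Finset.prod_insert (by simp [hne12, hne13]),
        Finset.prod_insert (by simp [hne23]), Finset.prod_singleton,
        hx0, hx1, hx2, hx3]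
      ring
    · rw [hxdef]
      have hj0 : j ≠ i0 := fun h => hj (by simp [hS, h])
      have hj1 : j ≠ i1 := fun h => hj (by simp [hS, h])
      have hj2 : j ≠ i2 := fun h => hj (by simp [hS, h])
      have hj3 : j ≠ i3 := fun h => hj (by simp [hS, h])
      rw [if_neg, if_neg, if_neg, if_neg]
      · exact fun h => hj3 (Fin.ext h)
      · exact fun h => hj2 (Fin.ext h)
      · exact fun h => hj1 (Fin.ext h)
      · exact fun h => hj0 (Fin.ext h)
  have hPix : x i * ∏ j ∈ Finset.univ.erase i, x j = -2 * b * c := by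
    rw [Finset.mul_prod_erase _ _ (Finset.mem_univ i), hprod]
  set P : ℤ := ∏ j ∈ Finset.univ.erase i, x j with hP
  -- key inequality
  have key : |x i| < |1 * P - x i| := by
    rcases eq_or_ne i i0 with h | h0'
    · have hxi : x i = -1 := h ▸ hx0
      have hPval : P = 2 * b * c := by rw [hxi] at hPix; linarith
      rw [hxi, hPval]
      calc |(-1 : ℤ)| = 1 := by norm_num
        _ < 1 * (2 * b * c) - -1 := by nlinarith
        _ ≤ |1 * (2 * b * c) - -1| := le_abs_self _
    · rcases eq_or_ne i i1 with h | h1'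
      · have hxi : x i = 2 := h ▸ hx1
        have hPval : P = -(b * c) := by rw [hxi] at hPix; linarith
        rw [hxi, hPval]
        calc |(2 : ℤ)| = 2 := by norm_num
          _ < -(1 * -(b * c) - 2) := by nlinarith
          _ ≤ |1 * -(b * c) - 2| := neg_le_abs _
      · rcases eq_or_ne i i2 with h | h2'
        · have hxi : x i = b := h ▸ hx2
          have hPval : P = -2 * c := by
            have hb0 : b ≠ 0 := by omega
            rw [hxi] at hPix
            have : b * P = b * (-2 * c) := by linarith [hPix]; 
            exact mul_left_cancel₀ hb0 this
          rw [hxi, hPval]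
          calc |b| = b := abs_of_nonneg (by omega)
            _ < -(1 * (-2 * c) - b) := by nlinarith
            _ ≤ |1 * (-2 * c) - b| := neg_le_abs _
        · rcases eq_or_ne i i3 with h | h3'
          · have hxi : x i = c := h ▸ hx3
            have hPval : P = -2 * b := by
              have hc0 : c ≠ 0 := by omega
              rw [hxi] at hPix
              have : c * P = c * (-2 * b) := by linarith [hPix]
              exact mul_left_cancel₀ hc0 this
            rw [hxi, hPval]
            calc |c| = c := abs_of_nonneg (by omega)
              _ < -(1 * (-2 * b) - c) := by nlinarith
              _ ≤ |1 * (-2 * b) - c| := neg_le_abs _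
          · have hxi : x i = 1 := by
              rw [hxdef]
              rw [if_neg (fun h => h0' (Fin.ext h)), if_neg (fun h => h1' (Fin.ext h)),
                if_neg (fun h => h2' (Fin.ext h)), if_neg (fun h => h3' (Fin.ext h))]
            have hPval : P = -2 * b * c := by rw [hxi] at hPix; linarith
            rw [hxi, hPval]
            calc |(1 : ℤ)| = 1 := by norm_num
              _ < -(1 * (-2 * b * c) - 1) := by nlinarith
              _ ≤ |1 * (-2 * b * c) - 1| := neg_le_abs _
  -- conclude about heights
  simp only [mhDelta, mhVieta]
  rw [← Finset.add_sum_erase _ (fun j => |x j|) (Finset.mem_univ i),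
    ← Finset.add_sum_erase _ (fun j => |Function.update x i (1 * P - x i) j|)
      (Finset.mem_univ i)]
  have hrest : ∑ j ∈ Finset.univ.erase i, |Function.update x i (1 * P - x i) j|
      = ∑ j ∈ Finset.univ.erase i, |x j| := by
    refine Finset.sum_congr rfl fun j hj => ?_
    rw [Function.update_of_ne (Finset.ne_of_mem_erase hj)]
  rw [hrest, Function.update_self]
  exact add_lt_add_of_lt_of_le key le_rfl
end

section
/- Let n ≥ 3, let k be an integer, and let b, c be integers with 1 ≤ b ≤ c such that x = (−1,1,…,1,b,c) (first coordinate −1, next n−3 coordinates equal to 1) is a solution of the Markoff–Hurwitz equation with a = 2. Then Δ(𝒱_{2,n,i}(x)) > Δ(x) for every i = 1,…,n. -/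
open Finset

/-- for `x = (−1,1,…,1,b,c)` with `1 ≤ b ≤ c` a solution with `a = 2`,
every Vieta involution strictly increases the height. -/
theorem mh_last_vertex_S2_a2 (n : ℕ) (hn : 3 ≤ n) (k b c : ℤ) (hb : 1 ≤ b) (hbc : b ≤ c)
    (x : Fin n → ℤ)
    (hxdef : ∀ i : Fin n, x i = if i.val = 0 then -1
      else if i.val = n - 2 then b else if i.val = n - 1 then c else 1)
    (hx : x ∈ mhSol n 2 k) :
    ∀ i : Fin n, mhDelta n x < mhDelta n (mhVieta n 2 i x) := by
  intro i
  have h2 : 2 ≤ n := by omega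
  -- the three special indices
  set i0 : Fin n := ⟨0, by omega⟩ with hi0
  set i1 : Fin n := ⟨n - 2, by omega⟩ with hi1
  set i2 : Fin n := ⟨n - 1, by omega⟩ with hi2
  have hne01 : i0 ≠ i1 := by simp [hi0, hi1, Fin.ext_iff]; omega
  have hne02 : i0 ≠ i2 := by simp [hi0, hi2, Fin.ext_iff]; omega
  have hne12 : i1 ≠ i2 := by simp [hi1, hi2, Fin.ext_iff]; omega
  have hx0 : x i0 = -1 := by rw [hxdef]; simp [hi0]
  have hx1 : x i1 = b := by
    rw [hxdef]; simp only [hi1]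
    rw [if_neg (by omega)]; simp
  have hx2 : x i2 = c := by
    rw [hxdef]; simp only [hi2]
    rw [if_neg (by omega), if_neg (by omega)]; simp
  have hxother : ∀ j : Fin n, j ≠ i0 → j ≠ i1 → j ≠ i2 → x j = 1 := by
    intro j hj0 hj1 hj2
    rw [hxdef]
    rw [if_neg, if_neg, if_neg]
    · intro h; exact hj2 (Fin.ext h)
    · intro h; exact hj1 (Fin.ext h)
    · intro h; exact hj0 (Fin.ext h)
  -- total product
  have hQ : ∏ j, x j = -(b * c) := by
    have hsub : ({i0, i1, i2} : Finset (Fin n)) ⊆ Finset.univ := Finset.subset_univ _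
    have := Finset.prod_subset hsub (fun j _ hj => by
      simp only [Finset.mem_insert, Finset.mem_singleton, not_or] at hj
      exact hxother j hj.1 hj.2.1 hj.2.2)
    rw [← this]
    rw [Finset.prod_insert (by simp [hne01, hne02]),
        Finset.prod_insert (by simp [hne12]), Finset.prod_singleton,
        hx0, hx1, hx2]
    ring
  have hkey : x i * ∏ j ∈ Finset.univ.erase i, x j = -(b * c) := by
    rw [Finset.mul_prod_erase Finset.univ x (Finset.mem_univ i), hQ]
  have hbc1 : 1 ≤ b * c := by nlinarith
  -- height decomposition
  have hDnew : mhDelta n (mhVieta n 2 i x)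
      = |2 * ∏ j ∈ Finset.univ.erase i, x j - x i| + ∑ j ∈ Finset.univ.erase i, |x j| := by
    unfold mhDelta mhVieta
    have : ∀ j, |Function.update x i (2 * ∏ j ∈ Finset.univ.erase i, x j - x i) j|
        = Function.update (fun j => |x j|) i (|2 * ∏ j ∈ Finset.univ.erase i, x j - x i|) j :=
      fun j => Function.apply_update (fun _ y => |y|) x i _ j
    rw [Finset.sum_congr rfl (fun j _ => this j)]
    rw [Finset.sum_update_of_mem (Finset.mem_univ i), Finset.erase_eq]
  have hDold : mhDelta n x = |x i| + ∑ j ∈ Finset.univ.erase i, |x j| := by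
    unfold mhDelta
    rw [← Finset.add_sum_erase Finset.univ (fun j => |x j|) (Finset.mem_univ i)]
  rw [hDnew, hDold]
  apply add_lt_add_of_lt_of_le ?_ le_rfl
  -- now case analysis on i
  by_cases h0 : i = i0
  · subst h0
    have hP : ∏ j ∈ Finset.univ.erase i0, x j = b * c := by
      rw [hx0] at hkey; linarith
    rw [hP, hx0]
    have : (0:ℤ) < 2 * (b * c) + 1 := by linarith
    calc |(-1 : ℤ)| = 1 := by norm_num
      _ < 2 * (b * c) - -1 := by linarith
      _ ≤ |2 * (b * c) - -1| := le_abs_self _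
  · by_cases h1 : i = i1
    · subst h1
      have hbne : (b : ℤ) ≠ 0 := by omega
      have hP : ∏ j ∈ Finset.univ.erase i1, x j = -c := by
        rw [hx1] at hkey
        have : b * ∏ j ∈ Finset.univ.erase i1, x j = b * (-c) := by linarith
        exact mul_left_cancel₀ hbne this
      rw [hP, hx1]
      calc |b| = b := abs_of_pos (by omega)
        _ < -(2 * (-c) - b) := by linarith
        _ ≤ |2 * (-c) - b| := neg_le_abs _
    · by_cases h2' : i = i2
      · subst h2'
        have hcne : (c : ℤ) ≠ 0 := by omega
        have hP : ∏ j ∈ Finset.univ.erase i2, x j = -b := by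
          rw [hx2] at hkey
          have : c * ∏ j ∈ Finset.univ.erase i2, x j = c * (-b) := by linarith
          exact mul_left_cancel₀ hcne this
        rw [hP, hx2]
        calc |c| = c := abs_of_pos (by omega)
          _ < -(2 * (-b) - c) := by linarith
          _ ≤ |2 * (-b) - c| := neg_le_abs _
      · have hxi : x i = 1 := hxother i h0 h1 h2'
        have hP : ∏ j ∈ Finset.univ.erase i, x j = -(b * c) := by
          rw [hxi] at hkey; linarith
        rw [hP, hxi]
        calc |(1:ℤ)| = 1 := by norm_num
          _ < -(2 * -(b * c) - 1) := by linarith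
          _ ≤ |2 * -(b * c) - 1| := neg_le_abs _
end

section
/- Let n ≥ 3 and k be integers. (i) If n ≥ 4, b ≥ 2 is an integer and x = (1,…,1,2,b,b) (n−3 coordinates equal to 1, then 2, b, b) is a solution of the Markoff–Hurwitz equation with a = 1, then Δ(𝒱_{1,n,i}(x)) ≥ Δ(x) for every i = 1,…,n. (ii) If b ≥ 1 is an integer and x = (1,…,1,b,b) (n−2 coordinates equal to 1) is a solution of the Markoff–Hurwitz equation with a = 2, then Δ(𝒱_{2,n,i}(x)) ≥ Δ(x) for every i = 1,…,n. -/
open Finset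

lemma delta_vieta_le (n : ℕ) (a : ℤ) (i : Fin n) (x : Fin n → ℤ)
    (h : |x i| ≤ |a * ∏ j ∈ Finset.univ.erase i, x j - x i|) :
    mhDelta n x ≤ mhDelta n (mhVieta n a i x) := by
  unfold mhDelta mhVieta
  rw [← Finset.add_sum_erase _ (fun j => |x j|) (mem_univ i),
      ← Finset.add_sum_erase _ (fun j => |Function.update x i
        (a * ∏ j ∈ Finset.univ.erase i, x j - x i) j|) (mem_univ i)]
  have : ∀ j ∈ Finset.univ.erase i,
      |Function.update x i (a * ∏ j ∈ Finset.univ.erase i, x j - x i) j| = |x j| := by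
    intro j hj
    rw [Function.update_of_ne (Finset.ne_of_mem_erase hj)]
  rw [Finset.sum_congr rfl this, Function.update_self]
  exact add_le_add_left h _

lemma mh_prod_i (n : ℕ) (hn : 4 ≤ n) (b : ℤ) (x : Fin n → ℤ)
    (hx : ∀ i : Fin n, x i = if n - 2 ≤ i.val then b
        else if i.val = n - 3 then 2 else 1) :
    ∏ j, x j = 2 * (b * b) := by
  set i1 : Fin n := ⟨n - 1, by omega⟩
  set i2 : Fin n := ⟨n - 2, by omega⟩
  set i3 : Fin n := ⟨n - 3, by omega⟩
  have h12 : i1 ≠ i2 := by simp [i1, i2, Fin.ext_iff]; omega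
  have h13 : i1 ≠ i3 := by simp [i1, i3, Fin.ext_iff]; omega
  have h23 : i2 ≠ i3 := by simp [i2, i3, Fin.ext_iff]; omega
  have key : ∏ j ∈ ({i3, i2, i1} : Finset (Fin n)), x j = ∏ j, x j := by
    apply Finset.prod_subset (subset_univ _)
    intro j _ hj
    simp only [mem_insert, mem_singleton, not_or] at hj
    rw [hx j]
    have hj1 : j.val ≠ n - 1 := fun h => hj.2.2 (Fin.ext h)
    have hj2 : j.val ≠ n - 2 := fun h => hj.2.1 (Fin.ext h)
    have hj3 : j.val ≠ n - 3 := fun h => hj.1 (Fin.ext h)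
    have : j.val < n := j.isLt
    rw [if_neg (by omega), if_neg (by omega)]
  rw [← key, Finset.prod_insert (by simp [h23.symm, h13.symm]),
      Finset.prod_insert (by simp [h12.symm]), Finset.prod_singleton,
      hx i1, hx i2, hx i3]
  have v1 : (i1 : ℕ) = n - 1 := rfl
  have v2 : (i2 : ℕ) = n - 2 := rfl
  have v3 : (i3 : ℕ) = n - 3 := rfl
  rw [v1, v2, v3, if_neg (by omega), if_pos (by omega), if_pos (by omega),
    if_pos (by omega)]

lemma mh_prod_ii (n : ℕ) (hn : 3 ≤ n) (b : ℤ) (x : Fin n → ℤ)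
    (hx : ∀ i : Fin n, x i = if n - 2 ≤ i.val then b else 1) :
    ∏ j, x j = b * b := by
  set i1 : Fin n := ⟨n - 1, by omega⟩
  set i2 : Fin n := ⟨n - 2, by omega⟩
  have h12 : i1 ≠ i2 := by simp [i1, i2, Fin.ext_iff]; omega
  have key : ∏ j ∈ ({i2, i1} : Finset (Fin n)), x j = ∏ j, x j := by
    apply Finset.prod_subset (subset_univ _)
    intro j _ hj
    simp only [mem_insert, mem_singleton, not_or] at hj
    rw [hx j]
    have hj1 : j.val ≠ n - 1 := fun h => hj.2 (Fin.ext h)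
    have hj2 : j.val ≠ n - 2 := fun h => hj.1 (Fin.ext h)
    have : j.val < n := j.isLt
    rw [if_neg (by omega)]
  rw [← key, Finset.prod_insert (by simp [h12.symm]), Finset.prod_singleton,
      hx i1, hx i2]
  have v1 : (i1 : ℕ) = n - 1 := rfl
  have v2 : (i2 : ℕ) = n - 2 := rfl
  rw [v1, v2, if_pos (by omega), if_pos (by omega)]

/-- (i) for `x = (1,…,1,2,b,b)` (`b ≥ 2`, `n ≥ 4`) a solution with `a = 1`,
and (ii) for `x = (1,…,1,b,b)` (`b ≥ 1`) a solution with `a = 2`, no Vieta involution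
decreases the height. -/
theorem mh_exceptional_no_descent (n : ℕ) (hn : 3 ≤ n) (k : ℤ) :
    (∀ b : ℤ, 2 ≤ b → 4 ≤ n → ∀ x : Fin n → ℤ,
      (∀ i : Fin n, x i = if n - 2 ≤ i.val then b
        else if i.val = n - 3 then 2 else 1) →
      x ∈ mhSol n 1 k →
      ∀ i : Fin n, mhDelta n x ≤ mhDelta n (mhVieta n 1 i x)) ∧
    (∀ b : ℤ, 1 ≤ b → ∀ x : Fin n → ℤ,
      (∀ i : Fin n, x i = if n - 2 ≤ i.val then b else 1) →
      x ∈ mhSol n 2 k →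
      ∀ i : Fin n, mhDelta n x ≤ mhDelta n (mhVieta n 2 i x)) := by
  constructor
  · intro b hb hn4 x hx _ i
    apply delta_vieta_le
    set P : ℤ := ∏ j ∈ Finset.univ.erase i, x j with hP
    have hQ : x i * P = 2 * (b * b) := by
      rw [hP, Finset.mul_prod_erase _ _ (mem_univ i), mh_prod_i n hn4 b x hx]
    have hxi := hx i
    by_cases h1 : n - 2 ≤ i.val
    · rw [if_pos h1] at hxi
      have hb0 : b ≠ 0 := by omega
      have hPv : P = 2 * b := by
        apply mul_left_cancel₀ hb0
        calc b * P = x i * P := by rw [hxi]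
          _ = 2 * (b * b) := hQ
          _ = b * (2 * b) := by ring
      rw [hxi, hPv]
      have : 1 * (2 * b) - b = b := by ring
      rw [this]
    · rw [if_neg h1] at hxi
      by_cases h2 : i.val = n - 3
      · rw [if_pos h2] at hxi
        have hPv : P = b * b := by
          have h2' : (2 : ℤ) ≠ 0 := by norm_num
          apply mul_left_cancel₀ h2'
          calc (2:ℤ) * P = x i * P := by rw [hxi]
            _ = 2 * (b * b) := hQ
        rw [hxi, hPv]
        rw [abs_of_nonneg (by norm_num : (0:ℤ) ≤ 2),
            abs_of_nonneg (by nlinarith : (0:ℤ) ≤ 1 * (b * b) - 2)]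
        nlinarith
      · rw [if_neg h2] at hxi
        have hPv : P = 2 * (b * b) := by rw [← hQ, hxi]; ring
        rw [hxi, hPv]
        rw [abs_of_nonneg (by norm_num : (0:ℤ) ≤ 1),
            abs_of_nonneg (by nlinarith : (0:ℤ) ≤ 1 * (2 * (b * b)) - 1)]
        nlinarith
  · intro b hb x hx _ i
    apply delta_vieta_le
    set P : ℤ := ∏ j ∈ Finset.univ.erase i, x j with hP
    have hQ : x i * P = b * b := by
      rw [hP, Finset.mul_prod_erase _ _ (mem_univ i), mh_prod_ii n hn b x hx]
    have hxi := hx i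
    by_cases h1 : n - 2 ≤ i.val
    · rw [if_pos h1] at hxi
      have hb0 : b ≠ 0 := by omega
      have hPv : P = b := by
        apply mul_left_cancel₀ hb0
        calc b * P = x i * P := by rw [hxi]
          _ = b * b := hQ
      rw [hxi, hPv]
      have : 2 * b - b = b := by ring
      rw [this]
    · rw [if_neg h1] at hxi
      have hPv : P = b * b := by rw [← hQ, hxi]; ring
      rw [hxi, hPv]
      rw [abs_of_nonneg (by norm_num : (0:ℤ) ≤ 1),
          abs_of_nonneg (by nlinarith : (0:ℤ) ≤ 2 * (b * b) - 1)]
      nlinarith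
end

section
/- Let n ≥ 3 and let a, k be integers with a > 0, (a,k) ≠ (1, n+1) and (a,k) ≠ (2, n−2). Then V_{a,k,n}(ℤ) has only finitely many Γ_{a,n}-orbits; i.e., there exists a finite subset F ⊆ V_{a,k,n}(ℤ) such that every solution is Γ_{a,n}-equivalent to some element of F. -/
open Finset

/-! ### Auxiliary material -/

/-- An explicit bound for reduced solutions. -/
def mhC (n : ℕ) (k : ℤ) : ℤ :=
  2 * ((n : ℤ) - 2) * (2 * ((n : ℤ) - 1) + 2 * |k|) ^ 2 + 3 * |k|

lemma mhVieta_involutive (n : ℕ) (a : ℤ) (i : Fin n) :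
    Function.Involutive (mhVieta n a i) := by
  intro x
  unfold mhVieta
  have hprod : ∏ j ∈ Finset.univ.erase i,
      (Function.update x i (a * ∏ j ∈ Finset.univ.erase i, x j - x i)) j
      = ∏ j ∈ Finset.univ.erase i, x j := by
    apply Finset.prod_congr rfl
    intro j hj
    exact Function.update_of_ne (Finset.ne_of_mem_erase hj) _ _
  rw [hprod]
  funext j
  by_cases hj : j = i
  · subst hj
    simp [Function.update_self]
  · simp [Function.update_of_ne hj]

lemma mhVieta_mem {n : ℕ} {a k : ℤ} {i : Fin n} {x : Fin n → ℤ}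
    (hx : x ∈ mhSol n a k) : mhVieta n a i x ∈ mhSol n a k := by
  have hmem : i ∈ (Finset.univ : Finset (Fin n)) := mem_univ i
  set P : ℤ := ∏ j ∈ Finset.univ.erase i, x j with hP
  set v : ℤ := a * P - x i with hv
  have hsum : ∑ j, (mhVieta n a i x) j ^ 2 = v ^ 2 + ∑ j ∈ Finset.univ.erase i, x j ^ 2 := by
    unfold mhVieta
    rw [show (fun j => (Function.update x i v j) ^ 2) = fun j =>
      Function.update (fun j => x j ^ 2) i (v ^ 2) j from funext fun j =>
        Function.apply_update (fun _ t => t ^ 2) x i v j]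
    rw [Finset.sum_update_of_mem hmem, Finset.erase_eq]
  have hprod : ∏ j, (mhVieta n a i x) j = v * P := by
    unfold mhVieta
    rw [Finset.prod_update_of_mem hmem, ← Finset.erase_eq]
  have hx' : ∑ j, x j ^ 2 - a * ∏ j, x j = k := hx
  have hxon : x i * P = ∏ j, x j := Finset.mul_prod_erase _ _ hmem
  have hxsum : ∑ j, x j ^ 2 = x i ^ 2 + ∑ j ∈ Finset.univ.erase i, x j ^ 2 :=
    (Finset.add_sum_erase _ _ hmem).symm
  show ∑ j, (mhVieta n a i x) j ^ 2 - a * ∏ j, (mhVieta n a i x) j = k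
  rw [hsum, hprod]
  have hkey : v ^ 2 - a * (v * P) = x i ^ 2 - a * (x i * P) := by rw [hv]; ring
  linarith [hx', hxon.symm ▸ hx', hxsum, hkey, hxon]

/-- The Vieta involution as a permutation of `ℤⁿ`. -/
def mhVietaPerm (n : ℕ) (a : ℤ) (i : Fin n) : Equiv.Perm (Fin n → ℤ) :=
  Function.Involutive.toPerm _ (mhVieta_involutive n a i)

lemma mhVietaPerm_apply (n : ℕ) (a : ℤ) (i : Fin n) (x : Fin n → ℤ) :
    mhVietaPerm n a i x = mhVieta n a i x := rfl

lemma mhVietaPerm_mem (n : ℕ) (a : ℤ) (i : Fin n) : mhVietaPerm n a i ∈ mhGamma n a :=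
  Subgroup.subset_closure (Or.inl ⟨i, fun _ => rfl⟩)

lemma one_le_prodZ {ι : Type*} {s : Finset ι} {f : ι → ℤ}
    (h1 : ∀ j ∈ s, 1 ≤ f j) : 1 ≤ ∏ j ∈ s, f j := by
  calc (1:ℤ) = ∏ _j ∈ s, 1 := by simp
  _ ≤ ∏ j ∈ s, f j := Finset.prod_le_prod (fun _ _ => zero_le_one) h1

lemma single_le_prodZ {ι : Type*} [DecidableEq ι] {s : Finset ι} {f : ι → ℤ}
    (h1 : ∀ j ∈ s, 1 ≤ f j) {j : ι} (hj : j ∈ s) : f j ≤ ∏ i ∈ s, f i := by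
  rw [← Finset.mul_prod_erase s f hj]
  have hrest : 1 ≤ ∏ i ∈ s.erase j, f i :=
    one_le_prodZ (fun i hi => h1 i (Finset.mem_of_mem_erase hi))
  nlinarith [h1 j hj]

lemma sum_sq_of_prod_two {ι : Type*} [DecidableEq ι] {s : Finset ι} {f : ι → ℤ}
    (h1 : ∀ j ∈ s, 1 ≤ f j) (hp : ∏ j ∈ s, f j = 2) :
    ∑ j ∈ s, f j ^ 2 = s.card + 3 := by
  induction s using Finset.induction with
  | empty => simp at hp
  | @insert b t hnot ih =>
    rw [Finset.prod_insert hnot] at hp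
    have hb : 1 ≤ f b := h1 b (mem_insert_self _ _)
    have ht : ∀ j ∈ t, 1 ≤ f j := fun j hj => h1 j (mem_insert_of_mem hj)
    have htp : 1 ≤ ∏ j ∈ t, f j := one_le_prodZ ht
    have hble : f b ≤ 2 := by nlinarith
    rw [Finset.sum_insert hnot, Finset.card_insert_of_notMem hnot]
    have hcases : f b = 1 ∨ f b = 2 := by omega
    rcases hcases with hfb | hfb
    · rw [hfb] at hp ⊢
      rw [ih ht (by linarith)]
      push_cast
      ring
    · rw [hfb] at hp ⊢
      have htp1 : ∏ j ∈ t, f j = 1 := by linarith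
      have hall : ∀ j ∈ t, f j = 1 := by
        intro j hj
        have := single_le_prodZ ht hj
        have := ht j hj
        omega
      have : ∑ j ∈ t, f j ^ 2 = t.card := by
        rw [Finset.sum_congr rfl (fun j hj => by rw [hall j hj])]
        simp
      rw [this]
      push_cast
      ring

set_option maxHeartbeats 1000000 in
lemma reduced_bound {n : ℕ} (hn : 3 ≤ n) {a k : ℤ} (ha : 0 < a)
    (h1 : ¬(a = 1 ∧ k = (n : ℤ) + 1)) (h2 : ¬(a = 2 ∧ k = (n : ℤ) - 2))
    {x : Fin n → ℤ} (hx : x ∈ mhSol n a k)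
    (hr : ∀ i, |x i| ≤ |a * ∏ j ∈ Finset.univ.erase i, x j - x i|) :
    ∀ i, |x i| ≤ mhC n k := by
  have hnZ : (3:ℤ) ≤ (n:ℤ) := by exact_mod_cast hn
  have hxe : ∑ i, x i ^ 2 - a * ∏ i, x i = k := hx
  have hCk : |k| ≤ mhC n k := by
    have h0 : (0:ℤ) ≤ 2 * ((n : ℤ) - 2) * (2 * ((n : ℤ) - 1) + 2 * |k|) ^ 2 := by
      apply mul_nonneg
      · linarith
      · positivity
    unfold mhC; linarith [abs_nonneg k]
  rcases le_or_gt (∏ i, x i) 0 with hP | hP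
  · -- nonpositive product: all coordinates are bounded by |k|
    intro i
    have haP : a * ∏ i, x i ≤ 0 := mul_nonpos_of_nonneg_of_nonpos (le_of_lt ha) hP
    have hsum : ∑ j, x j ^ 2 ≤ k := by linarith
    have hi : x i ^ 2 ≤ ∑ j, x j ^ 2 :=
      Finset.single_le_sum (fun j _ => sq_nonneg (x j)) (mem_univ i)
    have habs : |x i| ≤ x i ^ 2 := by
      rcases eq_or_ne (x i) 0 with h | h
      · simp [h]
      · have h1 : 1 ≤ |x i| := Int.one_le_abs h
        nlinarith [sq_abs (x i)]
    calc |x i| ≤ x i ^ 2 := habs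
      _ ≤ k := le_trans hi hsum
      _ ≤ |k| := le_abs_self k
      _ ≤ mhC n k := hCk
  · -- positive product
    set m : Fin n → ℤ := fun i => |x i| with hm
    have hm1 : ∀ i, 1 ≤ m i := by
      intro i
      apply Int.one_le_abs
      intro h
      rw [Finset.prod_eq_zero (mem_univ i) h] at hP
      exact lt_irrefl 0 hP
    have hmsq : ∀ i, m i ^ 2 = x i ^ 2 := fun i => sq_abs (x i)
    have hMP : ∏ i, m i = ∏ i, x i := by
      rw [hm, ← Finset.abs_prod]
      exact abs_of_pos hP
    have hred : ∀ i, 2 * m i ^ 2 ≤ a * ∏ j, m j := by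
      intro i
      have hPi : x i * ∏ j ∈ Finset.univ.erase i, x j = ∏ j, x j :=
        Finset.mul_prod_erase _ _ (mem_univ i)
      have hsq : x i ^ 2 ≤ (a * ∏ j ∈ Finset.univ.erase i, x j - x i) ^ 2 := by
        have h := pow_le_pow_left₀ (abs_nonneg (x i)) (hr i) 2
        rwa [sq_abs, sq_abs] at h
      set Pi := ∏ j ∈ Finset.univ.erase i, x j with hPidef
      have haP : 0 < a * ∏ j, x j := mul_pos ha hP
      have hPia : a * (x i * Pi) = a * ∏ j, x j := by rw [hPi]
      have h3 : 2 * (a * ∏ j, x j) ≤ (a * Pi) ^ 2 := by linarith [hsq, hPia]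
      have h3' := mul_le_mul_of_nonneg_right h3 (sq_nonneg (x i))
      have h4 : (a * Pi) ^ 2 * x i ^ 2 = (a * ∏ j, x j) ^ 2 := by rw [← hPi]; ring
      have h5 : (a * ∏ j, x j) * (2 * x i ^ 2) ≤ (a * ∏ j, x j) * (a * ∏ j, x j) := by
        nlinarith [h3', h4]
      have h6 := le_of_mul_le_mul_left h5 haP
      rw [hMP, hmsq]
      linarith
    -- pick the two largest coordinates
    obtain ⟨i₁, -, hmax1⟩ := Finset.exists_max_image Finset.univ m
      ⟨⟨0, by omega⟩, mem_univ _⟩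
    have hcard1 : (Finset.univ.erase i₁).card = n - 1 := by
      rw [Finset.card_erase_of_mem (mem_univ i₁), Finset.card_univ, Fintype.card_fin]
    have hne1 : (Finset.univ.erase i₁).Nonempty := by
      rw [← Finset.card_pos, hcard1]; omega
    obtain ⟨i₂, hi₂, hmax2⟩ := Finset.exists_max_image _ m hne1
    set s₂ := (Finset.univ.erase i₁).erase i₂ with hs₂
    have hcard2 : s₂.card = n - 2 := by
      rw [hs₂, Finset.card_erase_of_mem hi₂, hcard1]
      omega
    set u := m i₁ with hu
    set v := m i₂ with hv
    set Q := ∏ j ∈ s₂, m j with hQ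
    set S := ∑ j ∈ s₂, m j ^ 2 with hS
    have hu1 : 1 ≤ u := hm1 i₁
    have hv1 : 1 ≤ v := hm1 i₂
    have hvu : v ≤ u := hmax1 i₂ (mem_univ i₂)
    have hQ1 : 1 ≤ Q := one_le_prodZ (fun j _ => hm1 j)
    have hMdec : ∏ j, m j = u * (v * Q) := by
      rw [← Finset.mul_prod_erase _ m (mem_univ i₁), ← Finset.mul_prod_erase _ m hi₂]
    have hSdec : ∑ j, m j ^ 2 = u ^ 2 + (v ^ 2 + S) := by
      rw [← Finset.add_sum_erase _ _ (mem_univ i₁), ← Finset.add_sum_erase _ _ hi₂]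
    have hmsum : ∑ j, m j ^ 2 = ∑ j, x j ^ 2 := Finset.sum_congr rfl (fun j _ => hmsq j)
    set c := a * Q with hc
    have heq : u ^ 2 + (v ^ 2 + S) = c * (u * v) + k := by
      have h7 : u ^ 2 + (v ^ 2 + S) = a * (u * (v * Q)) + k := by
        rw [← hSdec, hmsum, ← hMdec, hMP]; linarith
      rw [h7]; ring
    have hru : 2 * u ^ 2 ≤ c * (u * v) := by
      have h := hred i₁
      rw [hMdec] at h
      calc 2 * u ^ 2 = 2 * m i₁ ^ 2 := by rw [hu]
      _ ≤ a * (u * (v * Q)) := h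
      _ = c * (u * v) := by ring
    have huv1 : 1 ≤ u * v := by nlinarith
    have hcv : 2 * u ≤ c * v := by
      have h : u * (2 * u) ≤ u * (c * v) := by nlinarith [hru]
      exact le_of_mul_le_mul_left h (by linarith)
    have hc2 : 2 ≤ c := by nlinarith [hcv, hvu, hu1, hv1]
    -- bound c
    have hSv : S ≤ ((n:ℤ) - 2) * v ^ 2 := by
      have h := Finset.sum_le_card_nsmul s₂ (fun j => m j ^ 2) (v ^ 2)
        (fun j hj => by
          show m j ^ 2 ≤ v ^ 2
          have hjv : m j ≤ v := hmax2 j (Finset.mem_of_mem_erase hj)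
          nlinarith [hm1 j, hv1])
      rw [hcard2] at h
      calc S ≤ (n - 2 : ℕ) • v ^ 2 := h
      _ = ((n:ℤ) - 2) * v ^ 2 := by
          rw [nsmul_eq_mul]; congr 1; push_cast; omega
    have hB : c ≤ 2 * ((n:ℤ) - 1) + 2 * |k| := by
      have hu2 : u ^ 2 ≤ v ^ 2 + S - k := by linarith [hru, heq]
      have hv2uv : v ^ 2 ≤ u * v := by nlinarith
      have hkabs : -k ≤ |k| := neg_le_abs k
      have h8 : c * (u * v) ≤ (2 * ((n:ℤ) - 1) + 2 * |k|) * (u * v) := by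
        nlinarith [heq, hu2, hSv, hv2uv, huv1, abs_nonneg k, hkabs,
          mul_le_mul_of_nonneg_left huv1 (abs_nonneg k),
          mul_le_mul_of_nonneg_left huv1 (by linarith : (0:ℤ) ≤ (n:ℤ) - 1)]
      exact le_of_mul_le_mul_right h8 (by linarith)
    set B := 2 * ((n:ℤ) - 1) + 2 * |k| with hBdef
    have hSB : S ≤ ((n:ℤ) - 2) * B ^ 2 := by
      have hQB : Q ≤ B := by nlinarith [hQ1]
      have h := Finset.sum_le_card_nsmul s₂ (fun j => m j ^ 2) (B ^ 2)
        (fun j hj => by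
          show m j ^ 2 ≤ B ^ 2
          have hjQ : m j ≤ Q := single_le_prodZ (fun i _ => hm1 i) hj
          nlinarith [hm1 j, hB, hQ1, abs_nonneg k, hnZ])
      rw [hcard2] at h
      calc S ≤ (n - 2 : ℕ) • B ^ 2 := h
      _ = ((n:ℤ) - 2) * B ^ 2 := by
          rw [nsmul_eq_mul]; congr 1; push_cast; omega
    clear_value m s₂ u v Q S c B
    rcases lt_or_eq_of_le hc2 with hc3 | hc2eq
    · -- c ≥ 3 : bounded
      have hc3' : 3 ≤ c := hc3
      have hv2uv : v ^ 2 ≤ u * v := by nlinarith only [hvu, hv1]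
      have h9 : (c - 2) * (u * v) ≤ 2 * S - 2 * k := by
        linarith only [heq, hru, hv2uv]
      have h10 : u * v ≤ 2 * S - 2 * k := by
        have hx1 : (0:ℤ) ≤ (c - 3) * (u * v) :=
          mul_nonneg (by linarith only [hc3'] : (0:ℤ) ≤ c - 3)
            (by linarith only [huv1] : (0:ℤ) ≤ u * v)
        linarith only [h9, hx1]
      have h11 : u ≤ 2 * S + 2 * |k| := by
        have hx2 : (0:ℤ) ≤ u * (v - 1) :=
          mul_nonneg (by linarith only [hu1]) (by linarith only [hv1])
        have hk : -k ≤ |k| := neg_le_abs k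
        nlinarith only [hx2, h10, hk]
      intro i
      have hiu : m i ≤ u := hmax1 i (mem_univ i)
      show |x i| ≤ mhC n k
      have hmi : |x i| = m i := by rw [hm]
      rw [hmi]
      rw [hBdef] at hSB
      unfold mhC
      linarith only [hSB, h11, hiu, abs_nonneg k]
    · -- c = 2 : excluded cases
      exfalso
      have hc2' : c = 2 := hc2eq.symm
      have hcv2 : c * v = 2 * v := by rw [hc2']
      have huvv : u = v := le_antisymm (by linarith only [hcv, hcv2]) hvu
      have hSk : S = k := by
        rw [huvv, hc2'] at heq
        linarith only [heq]
      have haQ : a * Q = 2 := by rw [← hc, hc2']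
      have ha2 : a ≤ 2 := by
        have := mul_le_mul_of_nonneg_left hQ1 (le_of_lt ha)
        linarith only [haQ, this]
      have ha1 : 1 ≤ a := ha
      have hcasesa : a = 1 ∨ a = 2 := by omega
      rcases hcasesa with haa | haa
      · -- a = 1, Q = 2, S = n+1
        have hQ2 : Q = 2 := by rw [haa] at haQ; linarith
        have hScard : S = (s₂.card : ℤ) + 3 := by
          rw [hS]
          exact sum_sq_of_prod_two (fun j _ => hm1 j) (by rw [← hQ]; exact hQ2)
        apply h1
        refine ⟨haa, ?_⟩
        rw [← hSk, hScard, hcard2]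
        push_cast
        omega
      · -- a = 2, Q = 1, S = n-2
        have hQ2 : Q = 1 := by rw [haa] at haQ; linarith
        have hall : ∀ j ∈ s₂, m j = 1 := by
          intro j hj
          have := single_le_prodZ (fun i _ => hm1 i) hj
          have := hm1 j
          omega
        have hScard : S = (s₂.card : ℤ) := by
          rw [hS, Finset.sum_congr rfl (fun j hj => by rw [hall j hj])]
          simp
        apply h2
        refine ⟨haa, ?_⟩
        rw [← hSk, hScard, hcard2]
        push_cast
        omega

lemma mh_descent {n : ℕ} (hn : 3 ≤ n) {a k : ℤ} (ha : 0 < a)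
    (h1 : ¬(a = 1 ∧ k = (n : ℤ) + 1)) (h2 : ¬(a = 2 ∧ k = (n : ℤ) - 2)) :
    ∀ (N : ℕ) (x : Fin n → ℤ), x ∈ mhSol n a k → (mhDelta n x).toNat < N →
      ∃ γ ∈ mhGamma n a, γ x ∈ mhSol n a k ∧ ∀ i, |γ x i| ≤ mhC n k := by
  intro N
  induction N with
  | zero => intro x _ hlt; omega
  | succ N ih =>
    intro x hx hN
    by_cases hb : ∀ i, |x i| ≤ mhC n k
    · exact ⟨1, one_mem _, by simpa using hx, by simpa using hb⟩
    · have hnotred : ¬ ∀ i, |x i| ≤ |a * ∏ j ∈ Finset.univ.erase i, x j - x i| :=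
        fun hcon => hb (reduced_bound hn ha h1 h2 hx hcon)
      push_neg at hnotred
      obtain ⟨i, hi⟩ := hnotred
      set y := mhVieta n a i x with hy
      have hy_sol : y ∈ mhSol n a k := mhVieta_mem hx
      have hdlt : mhDelta n y < mhDelta n x := by
        unfold mhDelta
        have hys : ∑ j, |y j| = |a * ∏ j ∈ Finset.univ.erase i, x j - x i|
            + ∑ j ∈ Finset.univ.erase i, |x j| := by
          rw [hy]
          unfold mhVieta
          rw [show (fun j => |Function.update x i
              (a * ∏ j ∈ Finset.univ.erase i, x j - x i) j|) = fun j =>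
            Function.update (fun j => |x j|) i
              (|a * ∏ j ∈ Finset.univ.erase i, x j - x i|) j from funext fun j =>
              Function.apply_update (fun _ t => |t|) x i _ j]
          rw [Finset.sum_update_of_mem (mem_univ i), Finset.erase_eq]
        have hxs : ∑ j, |x j| = |x i| + ∑ j ∈ Finset.univ.erase i, |x j| :=
          (Finset.add_sum_erase _ _ (mem_univ i)).symm
        linarith [hi]
      have hypos : 0 ≤ mhDelta n y := Finset.sum_nonneg fun j _ => abs_nonneg _
      have hlt' : (mhDelta n y).toNat < N := by omega
      obtain ⟨γ, hγ, hsol, hbound⟩ := ih y hy_sol hlt'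
      refine ⟨γ * mhVietaPerm n a i, mul_mem hγ (mhVietaPerm_mem n a i), ?_, ?_⟩
      · have : (γ * mhVietaPerm n a i) x = γ y := rfl
        rw [this]; exact hsol
      · have : (γ * mhVietaPerm n a i) x = γ y := rfl
        rw [this]; exact hbound

/-- for `a > 0` with `(a,k) ≠ (1, n+1)` and `(a,k) ≠ (2, n−2)`, the set
of solutions has only finitely many `Γ_{a,n}`-orbits. -/
theorem mh_finitely_many_orbits (n : ℕ) (hn : 3 ≤ n) (a k : ℤ) (ha : 0 < a)
    (h1 : ¬(a = 1 ∧ k = (n : ℤ) + 1)) (h2 : ¬(a = 2 ∧ k = (n : ℤ) - 2)) :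
    ∃ F : Finset (Fin n → ℤ), (↑F : Set (Fin n → ℤ)) ⊆ mhSol n a k ∧
      ∀ x ∈ mhSol n a k, ∃ γ ∈ mhGamma n a, ∃ y ∈ F, γ x = y := by
  classical
  have hfin : {y : Fin n → ℤ | y ∈ mhSol n a k ∧ ∀ i, |y i| ≤ mhC n k}.Finite := by
    apply Set.Finite.subset (Set.Finite.pi (fun _ : Fin n => Set.finite_Icc (-(mhC n k)) (mhC n k)))
    intro y hy
    rw [Set.mem_univ_pi]
    intro i
    exact Set.mem_Icc.mpr (abs_le.mp (hy.2 i))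
  refine ⟨hfin.toFinset, ?_, ?_⟩
  · intro y hy
    rw [Set.Finite.coe_toFinset] at hy
    exact hy.1
  · intro x hx
    obtain ⟨γ, hγ, hsol, hbound⟩ := mh_descent hn ha h1 h2
      ((mhDelta n x).toNat + 1) x hx (by omega)
    exact ⟨γ, hγ, γ x, (Set.Finite.mem_toFinset hfin).mpr ⟨hsol, hbound⟩, rfl⟩
end

section
/- Let n ≥ 3. If (a,k) = (1, n+1) (with n ≥ 4 so the tuples below make sense) or (a,k) = (2, n−2), then V_{a,k,n}(ℤ) has infinitely many Γ_{a,n}-orbits. More precisely: for a = 1, k = n+1 the tuples (1,…,1,2,t,t) (n−3 ones, then 2, t, t) for integers t ≥ 2 are solutions and are pairwise non-Γ_{1,n}-equivalent; for a = 2, k = n−2 the tuples (1,…,1,t,t) (n−2 ones) for integers t ≥ 1 are solutions and are pairwise non-Γ_{2,n}-equivalent. -/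
open Finset

/-! ### Auxiliary machinery -/

/-- The number of coordinates divisible by `m`. -/
def mhD {n : ℕ} (m : ℤ) (z : Fin n → ℤ) : ℕ :=
  (Finset.univ.filter fun i => m ∣ z i).card

lemma mhVieta_invol {n : ℕ} (a : ℤ) (i : Fin n) (z : Fin n → ℤ) :
    mhVieta n a i (mhVieta n a i z) = z := by
  have hp : ∏ j ∈ Finset.univ.erase i, (mhVieta n a i z) j
      = ∏ j ∈ Finset.univ.erase i, z j := by
    refine Finset.prod_congr rfl fun j hj => ?_
    exact Function.update_of_ne (Finset.mem_erase.mp hj).1 _ _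
  funext j
  by_cases h : j = i
  · subst h
    simp only [mhVieta, Function.update_self]
    rw [Finset.prod_congr rfl fun k hk =>
      Function.update_of_ne (Finset.mem_erase.mp hk).1 _ z]
    ring
  · simp only [mhVieta]
    rw [Function.update_of_ne h, Function.update_of_ne h]

lemma mhVieta_dvd_iff {n : ℕ} (a m : ℤ) (i : Fin n) (z : Fin n → ℤ)
    (hz : 2 ≤ mhD m z) (j : Fin n) : m ∣ mhVieta n a i z j ↔ m ∣ z j := by
  obtain ⟨p, q, hp, hq, hpq⟩ := Finset.one_lt_card_iff.mp hz
  simp only [Finset.mem_filter] at hp hq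
  obtain ⟨j₀, hj₀i, hj₀d⟩ : ∃ j₀, j₀ ≠ i ∧ m ∣ z j₀ := by
    rcases eq_or_ne p i with rfl | hpi
    · exact ⟨q, Ne.symm hpq, hq.2⟩
    · exact ⟨p, hpi, hp.2⟩
  have hprod : m ∣ a * ∏ k ∈ Finset.univ.erase i, z k := by
    refine Dvd.dvd.mul_left ?_ a
    exact hj₀d.trans (Finset.dvd_prod_of_mem _ (Finset.mem_erase.mpr ⟨hj₀i, Finset.mem_univ _⟩))
  by_cases h : j = i
  · subst h
    simp only [mhVieta, Function.update_self]
    exact dvd_sub_right hprod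
  · simp only [mhVieta]
    rw [Function.update_of_ne h]

lemma mhD_vieta {n : ℕ} (a m : ℤ) (i : Fin n) (z : Fin n → ℤ)
    (hz : 2 ≤ mhD m z) : mhD m (mhVieta n a i z) = mhD m z := by
  unfold mhD
  congr 1
  exact Finset.filter_congr fun j _ => mhVieta_dvd_iff a m i z hz j

lemma mhD_sign {n : ℕ} (m : ℤ) (s t : Fin n) (z : Fin n → ℤ) :
    mhD m (mhSign n s t z) = mhD m z := by
  unfold mhD
  congr 1
  refine Finset.filter_congr fun j _ => ?_
  simp only [mhSign]
  split <;> simp [dvd_neg]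

lemma mhD_perm {n : ℕ} (m : ℤ) (σ : Equiv.Perm (Fin n)) (z : Fin n → ℤ) :
    mhD m (mhPerm n σ z) = mhD m z := by
  unfold mhD mhPerm
  rw [← Fintype.card_subtype, ← Fintype.card_subtype]
  exact Fintype.card_congr (σ.subtypeEquiv fun i => Iff.rfl)

/-- Key invariance: having at least two coordinates divisible by `m` is a `Γ`-invariant. -/
lemma mhGamma_D {n : ℕ} (a : ℤ) {γ : Equiv.Perm (Fin n → ℤ)} (hγ : γ ∈ mhGamma n a)
    (m : ℤ) (z : Fin n → ℤ) : 2 ≤ mhD m z ↔ 2 ≤ mhD m (γ z) := by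
  induction hγ using Subgroup.closure_induction generalizing z with
  | mem e he =>
    rcases he with ⟨i, hi⟩ | ⟨s, t, _, hst⟩ | ⟨σ, hσ⟩
    · rw [hi z]
      constructor
      · intro h; rw [mhD_vieta a m i z h]; exact h
      · intro h
        have := mhD_vieta a m i _ h
        rw [mhVieta_invol] at this
        exact this ▸ h
    · rw [hst z, mhD_sign]
    · rw [hσ z, mhD_perm]
  | one => simp
  | mul f g hf hg ihf ihg =>
    rw [Equiv.Perm.mul_apply]
    exact (ihg z).trans (ihf (g z))
  | inv f hf ihf =>
    have := (ihf (f⁻¹ z)).symm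
    rwa [Equiv.Perm.coe_inv, Equiv.apply_symm_apply, ← Equiv.Perm.coe_inv] at this

section comp
variable (n : ℕ)

lemma mh_setA (hn : 2 ≤ n) :
    (univ.filter fun i : Fin n => n - 2 ≤ i.val)
      = {(⟨n - 2, by omega⟩ : Fin n), ⟨n - 1, by omega⟩} := by
  ext i
  simp only [mem_filter, mem_univ, true_and, mem_insert, mem_singleton, Fin.ext_iff]
  have := i.isLt
  omega

lemma mh_cardA (hn : 2 ≤ n) :
    (univ.filter fun i : Fin n => n - 2 ≤ i.val).card = 2 := by
  rw [mh_setA n hn]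
  rw [card_insert_of_notMem (by simp only [mem_singleton, Fin.ext_iff]; omega)]
  simp

lemma mh_cardAc (hn : 2 ≤ n) :
    (univ.filter fun i : Fin n => ¬ (n - 2 ≤ i.val)).card = n - 2 := by
  have h := Finset.card_filter_add_card_filter_not
    (s := (univ : Finset (Fin n))) (p := fun i : Fin n => n - 2 ≤ i.val)
  rw [mh_cardA n hn] at h
  simp only [card_univ, Fintype.card_fin] at h
  omega

lemma mh_sol2 (hn : 3 ≤ n) (t : ℤ) :
    (fun i : Fin n => if n - 2 ≤ i.val then t else 1) ∈ mhSol n 2 ((n : ℤ) - 2) := by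
  show (∑ i : Fin n, (if n - 2 ≤ i.val then t else 1) ^ 2)
      - 2 * ∏ i : Fin n, (if n - 2 ≤ i.val then t else 1) = (n : ℤ) - 2
  rw [← Finset.sum_filter_add_sum_filter_not univ (fun i : Fin n => n - 2 ≤ i.val),
      ← Finset.prod_filter_mul_prod_filter_not univ (fun i : Fin n => n - 2 ≤ i.val)]
  have h1 : ∑ i ∈ univ.filter (fun i : Fin n => n - 2 ≤ i.val),
      (if n - 2 ≤ i.val then t else 1) ^ 2 = 2 * t ^ 2 := by
    rw [Finset.sum_congr rfl (fun i hi => by rw [if_pos (mem_filter.mp hi).2]),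
      Finset.sum_const, mh_cardA n (by omega)]
    ring
  have h2 : ∑ i ∈ univ.filter (fun i : Fin n => ¬ (n - 2 ≤ i.val)),
      (if n - 2 ≤ i.val then t else 1) ^ 2 = ((n : ℤ) - 2) := by
    rw [Finset.sum_congr rfl (fun i hi => by rw [if_neg (mem_filter.mp hi).2]),
      Finset.sum_const, mh_cardAc n (by omega)]
    simp only [one_pow, nsmul_eq_mul, mul_one]
    omega
  have h3 : ∏ i ∈ univ.filter (fun i : Fin n => n - 2 ≤ i.val),
      (if n - 2 ≤ i.val then t else 1) = t ^ 2 := by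
    rw [Finset.prod_congr rfl (fun i hi => by rw [if_pos (mem_filter.mp hi).2]),
      Finset.prod_const, mh_cardA n (by omega)]
  have h4 : ∏ i ∈ univ.filter (fun i : Fin n => ¬ (n - 2 ≤ i.val)),
      (if n - 2 ≤ i.val then t else 1) = 1 := by
    rw [Finset.prod_congr rfl (fun i hi => by rw [if_neg (mem_filter.mp hi).2]),
      Finset.prod_const, one_pow]
  rw [h1, h2, h3, h4]
  ring

lemma mh_setB (hn : 4 ≤ n) :
    ((univ.filter fun i : Fin n => ¬ (n - 2 ≤ i.val)).filter
      fun i : Fin n => i.val = n - 3) = {(⟨n - 3, by omega⟩ : Fin n)} := by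
  ext i
  simp only [mem_filter, mem_univ, true_and, mem_singleton, Fin.ext_iff]
  omega

lemma mh_cardC (hn : 4 ≤ n) :
    ((univ.filter fun i : Fin n => ¬ (n - 2 ≤ i.val)).filter
      fun i : Fin n => ¬ (i.val = n - 3)).card = n - 3 := by
  have h := Finset.card_filter_add_card_filter_not
    (s := (univ.filter fun i : Fin n => ¬ (n - 2 ≤ i.val)))
    (p := fun i : Fin n => i.val = n - 3)
  rw [mh_setB n hn, mh_cardAc n (by omega), Finset.card_singleton] at h
  omega

lemma mh_sol1 (hn : 4 ≤ n) (t : ℤ) :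
    (fun i : Fin n => if n - 2 ≤ i.val then t else if i.val = n - 3 then 2 else 1)
      ∈ mhSol n 1 ((n : ℤ) + 1) := by
  set f : Fin n → ℤ := fun i => if n - 2 ≤ i.val then t else if i.val = n - 3 then 2 else 1
    with hf
  have hfA : ∀ i ∈ univ.filter (fun i : Fin n => n - 2 ≤ i.val), f i = t := by
    intro i hi; simp only [hf]; rw [if_pos (mem_filter.mp hi).2]
  have hfB : ∀ i ∈ (univ.filter fun i : Fin n => ¬ (n - 2 ≤ i.val)).filter
      (fun i : Fin n => i.val = n - 3), f i = 2 := by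
    intro i hi
    obtain ⟨hi1, hi2⟩ := mem_filter.mp hi
    simp only [hf]
    rw [if_neg (mem_filter.mp hi1).2, if_pos hi2]
  have hfC : ∀ i ∈ (univ.filter fun i : Fin n => ¬ (n - 2 ≤ i.val)).filter
      (fun i : Fin n => ¬ (i.val = n - 3)), f i = 1 := by
    intro i hi
    obtain ⟨hi1, hi2⟩ := mem_filter.mp hi
    simp only [hf]
    rw [if_neg (mem_filter.mp hi1).2, if_neg hi2]
  have h1 : ∑ i ∈ univ.filter (fun i : Fin n => n - 2 ≤ i.val), f i ^ 2 = 2 * t ^ 2 := by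
    rw [Finset.sum_congr rfl (fun i hi => by rw [hfA i hi]),
      Finset.sum_const, mh_cardA n (by omega)]
    ring
  have h2 : ∑ i ∈ (univ.filter fun i : Fin n => ¬ (n - 2 ≤ i.val)).filter
      (fun i : Fin n => i.val = n - 3), f i ^ 2 = 4 := by
    rw [Finset.sum_congr rfl (fun i hi => by rw [hfB i hi]), mh_setB n hn,
      Finset.sum_singleton]
    norm_num
  have h3 : ∑ i ∈ (univ.filter fun i : Fin n => ¬ (n - 2 ≤ i.val)).filter
      (fun i : Fin n => ¬ (i.val = n - 3)), f i ^ 2 = (n : ℤ) - 3 := by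
    rw [Finset.sum_congr rfl (fun i hi => by rw [hfC i hi]),
      Finset.sum_const, mh_cardC n hn]
    simp only [one_pow, nsmul_eq_mul, mul_one]
    omega
  have h4 : ∏ i ∈ univ.filter (fun i : Fin n => n - 2 ≤ i.val), f i = t ^ 2 := by
    rw [Finset.prod_congr rfl (fun i hi => by rw [hfA i hi]),
      Finset.prod_const, mh_cardA n (by omega)]
  have h5 : ∏ i ∈ (univ.filter fun i : Fin n => ¬ (n - 2 ≤ i.val)).filter
      (fun i : Fin n => i.val = n - 3), f i = 2 := by
    rw [Finset.prod_congr rfl (fun i hi => by rw [hfB i hi]), mh_setB n hn,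
      Finset.prod_singleton]
  have h6 : ∏ i ∈ (univ.filter fun i : Fin n => ¬ (n - 2 ≤ i.val)).filter
      (fun i : Fin n => ¬ (i.val = n - 3)), f i = 1 := by
    rw [Finset.prod_congr rfl (fun i hi => by rw [hfC i hi]), Finset.prod_const, one_pow]
  show (∑ i : Fin n, f i ^ 2) - 1 * ∏ i : Fin n, f i = (n : ℤ) + 1
  rw [← Finset.sum_filter_add_sum_filter_not univ (fun i : Fin n => n - 2 ≤ i.val),
      ← Finset.prod_filter_mul_prod_filter_not univ (fun i : Fin n => n - 2 ≤ i.val),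
      ← Finset.sum_filter_add_sum_filter_not
        (univ.filter fun i : Fin n => ¬ (n - 2 ≤ i.val)) (fun i : Fin n => i.val = n - 3),
      ← Finset.prod_filter_mul_prod_filter_not
        (univ.filter fun i : Fin n => ¬ (n - 2 ≤ i.val)) (fun i : Fin n => i.val = n - 3),
      h1, h2, h3, h4, h5, h6]
  ring

lemma mh_D_two (hn : 2 ≤ n) (t : ℤ) (x : Fin n → ℤ)
    (hx : ∀ i : Fin n, n - 2 ≤ i.val → x i = t) : 2 ≤ mhD t x := by
  refine Finset.one_lt_card_iff.mpr
    ⟨⟨n - 2, by omega⟩, ⟨n - 1, by omega⟩, ?_, ?_, ?_⟩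
  · exact Finset.mem_filter.mpr ⟨Finset.mem_univ _, by rw [hx _ (le_refl _)]⟩
  · exact Finset.mem_filter.mpr ⟨Finset.mem_univ _, by rw [hx _ (by omega : n - 2 ≤ n - 1)]⟩
  · simp only [ne_eq, Fin.mk.injEq]
    omega

lemma mh_dvd_fam2 (hn : 3 ≤ n) (m u : ℤ) (hm : 2 ≤ m) (y : Fin n → ℤ)
    (hy : ∀ i : Fin n, y i = if n - 2 ≤ i.val then u else 1)
    (h : 2 ≤ mhD m y) : m ∣ u := by
  obtain ⟨p, hp⟩ := Finset.card_pos.mp (by omega : 0 < mhD m y)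
  rw [Finset.mem_filter] at hp
  have hd := hp.2
  rw [hy p] at hd
  by_cases hc : n - 2 ≤ p.val
  · rwa [if_pos hc] at hd
  · rw [if_neg hc] at hd
    have := Int.le_of_dvd one_pos hd
    omega

lemma mh_dvd_fam1 (hn : 4 ≤ n) (m u : ℤ) (hm : 2 ≤ m) (y : Fin n → ℤ)
    (hy : ∀ i : Fin n, y i = if n - 2 ≤ i.val then u
      else if i.val = n - 3 then 2 else 1)
    (h : 2 ≤ mhD m y) : m ∣ u := by
  obtain ⟨p, q, hp, hq, hpq⟩ := Finset.one_lt_card_iff.mp h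
  rw [Finset.mem_filter] at hp hq
  have hcls : ∀ r : Fin n, m ∣ y r → n - 2 ≤ r.val ∨ r.val = n - 3 := by
    intro r hr
    rw [hy r] at hr
    by_contra hc
    push_neg at hc
    rw [if_neg (by omega : ¬ (n - 2 ≤ r.val)), if_neg hc.2] at hr
    have := Int.le_of_dvd one_pos hr
    omega
  have hup : ∀ r : Fin n, m ∣ y r → n - 2 ≤ r.val → m ∣ u := by
    intro r hr h2; rwa [hy r, if_pos h2] at hr
  rcases hcls p hp.2 with h1 | h1
  · exact hup p hp.2 h1
  rcases hcls q hq.2 with h2 | h2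
  · exact hup q hq.2 h2
  exact absurd (Fin.ext (h1.trans h2.symm)) hpq

lemma mh_ineq1 (hn : 4 ≤ n) (t u : ℤ) (ht : 2 ≤ t) (hu : 2 ≤ u)
    (x y : Fin n → ℤ)
    (hx : ∀ i : Fin n, x i = if n - 2 ≤ i.val then t
      else if i.val = n - 3 then 2 else 1)
    (hy : ∀ i : Fin n, y i = if n - 2 ≤ i.val then u
      else if i.val = n - 3 then 2 else 1)
    (hne : t ≠ u) (γ : Equiv.Perm (Fin n → ℤ)) (hγ : γ ∈ mhGamma n 1)
    (heq : γ x = y) : False := by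
  have hxt : ∀ i : Fin n, n - 2 ≤ i.val → x i = t := by
    intro i hi; rw [hx i, if_pos hi]
  have hyu : ∀ i : Fin n, n - 2 ≤ i.val → y i = u := by
    intro i hi; rw [hy i, if_pos hi]
  have hDx : 2 ≤ mhD t x := mh_D_two n (by omega) t x hxt
  have hDy : 2 ≤ mhD u y := mh_D_two n (by omega) u y hyu
  have hDty : 2 ≤ mhD t y := by
    rw [← heq]; exact (mhGamma_D 1 hγ t x).mp hDx
  have hDux : 2 ≤ mhD u x := by
    refine (mhGamma_D 1 hγ u x).mpr ?_
    rw [heq]; exact hDy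
  have htu : t ∣ u := mh_dvd_fam1 n hn t u ht y hy hDty
  have hut : u ∣ t := mh_dvd_fam1 n hn u t hu x hx hDux
  exact hne (Int.dvd_antisymm (by omega) (by omega) htu hut)

lemma mh_ineq2 (hn : 3 ≤ n) (t u : ℤ) (ht : 1 ≤ t) (hu : 1 ≤ u)
    (x y : Fin n → ℤ)
    (hx : ∀ i : Fin n, x i = if n - 2 ≤ i.val then t else 1)
    (hy : ∀ i : Fin n, y i = if n - 2 ≤ i.val then u else 1)
    (hne : t ≠ u) (γ : Equiv.Perm (Fin n → ℤ)) (hγ : γ ∈ mhGamma n 2)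
    (heq : γ x = y) : False := by
  have hxt : ∀ i : Fin n, n - 2 ≤ i.val → x i = t := by
    intro i hi; rw [hx i, if_pos hi]
  have hyu : ∀ i : Fin n, n - 2 ≤ i.val → y i = u := by
    intro i hi; rw [hy i, if_pos hi]
  have hDx : 2 ≤ mhD t x := mh_D_two n (by omega) t x hxt
  have hDy : 2 ≤ mhD u y := mh_D_two n (by omega) u y hyu
  have htu : t ∣ u := by
    rcases eq_or_lt_of_le ht with h1 | h1
    · rw [← h1]; exact one_dvd u
    · have hDty : 2 ≤ mhD t y := by
        rw [← heq]; exact (mhGamma_D 2 hγ t x).mp hDx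
      exact mh_dvd_fam2 n hn t u (by omega) y hy hDty
  have hut : u ∣ t := by
    rcases eq_or_lt_of_le hu with h1 | h1
    · rw [← h1]; exact one_dvd t
    · have hDux : 2 ≤ mhD u x := by
        refine (mhGamma_D 2 hγ u x).mpr ?_
        rw [heq]; exact hDy
      exact mh_dvd_fam2 n hn u t (by omega) x hx hDux
  exact hne (Int.dvd_antisymm (by omega) (by omega) htu hut)

end comp

/-- for `(a,k) = (1, n+1)` (with `n ≥ 4`) and for `(a,k) = (2, n−2)`
there are infinitely many `Γ_{a,n}`-orbits: the displayed one-parameter families consist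
of pairwise `Γ`-inequivalent solutions, and no finite set of solutions meets all orbits. -/
theorem mh_infinitely_many_orbits (n : ℕ) (hn : 3 ≤ n) :
    ((4 ≤ n → ∀ t u : ℤ, 2 ≤ t → 2 ≤ u → ∀ x y : Fin n → ℤ,
      (∀ i : Fin n, x i = if n - 2 ≤ i.val then t
        else if i.val = n - 3 then 2 else 1) →
      (∀ i : Fin n, y i = if n - 2 ≤ i.val then u
        else if i.val = n - 3 then 2 else 1) →
      x ∈ mhSol n 1 ((n : ℤ) + 1) ∧
        (t ≠ u → ∀ γ ∈ mhGamma n 1, γ x ≠ y)) ∧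
    (∀ t u : ℤ, 1 ≤ t → 1 ≤ u → ∀ x y : Fin n → ℤ,
      (∀ i : Fin n, x i = if n - 2 ≤ i.val then t else 1) →
      (∀ i : Fin n, y i = if n - 2 ≤ i.val then u else 1) →
      x ∈ mhSol n 2 ((n : ℤ) - 2) ∧
        (t ≠ u → ∀ γ ∈ mhGamma n 2, γ x ≠ y))) ∧
    (4 ≤ n → ¬∃ F : Finset (Fin n → ℤ),
      ∀ x ∈ mhSol n 1 ((n : ℤ) + 1), ∃ γ ∈ mhGamma n 1, ∃ y ∈ F, γ x = y) ∧
    (¬∃ F : Finset (Fin n → ℤ),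
      ∀ x ∈ mhSol n 2 ((n : ℤ) - 2), ∃ γ ∈ mhGamma n 2, ∃ y ∈ F, γ x = y) := by
  constructor
  · constructor
    · intro hn4 t u ht hu x y hx hy
      refine ⟨?_, fun hne γ hγ heq => mh_ineq1 n hn4 t u ht hu x y hx hy hne γ hγ heq⟩
      have hxe : x = fun i : Fin n =>
          if n - 2 ≤ i.val then t else if i.val = n - 3 then 2 else 1 := funext hx
      rw [hxe]
      exact mh_sol1 n hn4 t
    · intro t u ht hu x y hx hy
      refine ⟨?_, fun hne γ hγ heq => mh_ineq2 n hn t u ht hu x y hx hy hne γ hγ heq⟩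
      have hxe : x = fun i : Fin n =>
          if n - 2 ≤ i.val then t else 1 := funext hx
      rw [hxe]
      exact mh_sol2 n hn t
  constructor
  · rintro hn4 ⟨F, hF⟩
    choose γ hγ y hyF hEq using fun k : ℕ =>
      hF (fun i : Fin n =>
          if n - 2 ≤ i.val then (k : ℤ) + 2 else if i.val = n - 3 then 2 else 1)
        (mh_sol1 n hn4 ((k : ℤ) + 2))
    have hinj : Function.Injective y := by
      intro k1 k2 hkeq
      by_contra hk
      refine mh_ineq1 n hn4 ((k1 : ℤ) + 2) ((k2 : ℤ) + 2) (by omega) (by omega) _ _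
        (fun i => rfl) (fun i => rfl) (by intro h; apply hk; omega)
        ((γ k2)⁻¹ * γ k1) (mul_mem (inv_mem (hγ k2)) (hγ k1)) ?_
      rw [Equiv.Perm.mul_apply, hEq k1, hkeq, ← hEq k2, Equiv.Perm.coe_inv, Equiv.symm_apply_apply]
    exact (Set.infinite_of_injective_forall_mem hinj
      (fun k => Finset.mem_coe.mpr (hyF k))) F.finite_toSet
  · rintro ⟨F, hF⟩
    choose γ hγ y hyF hEq using fun k : ℕ =>
      hF (fun i : Fin n => if n - 2 ≤ i.val then (k : ℤ) + 1 else 1)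
        (mh_sol2 n hn ((k : ℤ) + 1))
    have hinj : Function.Injective y := by
      intro k1 k2 hkeq
      by_contra hk
      refine mh_ineq2 n hn ((k1 : ℤ) + 1) ((k2 : ℤ) + 1) (by omega) (by omega) _ _
        (fun i => rfl) (fun i => rfl) (by intro h; apply hk; omega)
        ((γ k2)⁻¹ * γ k1) (mul_mem (inv_mem (hγ k2)) (hγ k1)) ?_
      rw [Equiv.Perm.mul_apply, hEq k1, hkeq, ← hEq k2, Equiv.Perm.coe_inv, Equiv.symm_apply_apply]
    exact (Set.infinite_of_injective_forall_mem hinj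
      (fun k => Finset.mem_coe.mpr (hyF k))) F.finite_toSet
end

section
/- Let n ≥ 3 and let a, k be integers with a > 0. The set 𝔖_{>2}(a,k,n) = {x ∈ V_{a,k,n}(ℤ) : 0 < x_1 ≤ ⋯ ≤ x_n, 2x_n ≤ a·x_1⋯x_{n−1}, and a·x_1⋯x_{n−2} > 2} ∪ {x ∈ V_{a,k,n}(ℤ) : 0 < −x_1 ≤ x_2 ≤ ⋯ ≤ x_n and a·x_1⋯x_{n−2} < −2} is finite. -/
open Finset

/-- `𝔖₀(a,k,n)`: solutions `(0, x₂, …, xₙ)` with `0 ≤ x₂ ≤ ⋯ ≤ xₙ` and `x₂² + ⋯ + xₙ² = k`. -/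
def mhS0 (n : ℕ) (k : ℤ) : Set (Fin n → ℤ) :=
  {x | (∀ i : Fin n, i.val = 0 → x i = 0) ∧ Monotone x ∧ ∑ i, x i ^ 2 = k}

/-- `𝔖₁(a,k,n)`: for `a = 1`, the tuples `(−1,1,…,1,p,q)` with `1 ≤ p ≤ q` and
`p² + q² + pq = k − n + 2`; empty for `a > 1`. -/
def mhS1 (n : ℕ) (a k : ℤ) : Set (Fin n → ℤ) :=
  {x | a = 1 ∧ ∃ p q : ℤ, 1 ≤ p ∧ p ≤ q ∧ p ^ 2 + q ^ 2 + p * q = k - n + 2 ∧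
    ∀ i : Fin n, x i = if i.val = 0 then -1 else if i.val = n - 2 then p
      else if i.val = n - 1 then q else 1}

/-- `𝔖₂(a,k,n)`. -/
def mhS2 (n : ℕ) (a k : ℤ) : Set (Fin n → ℤ) :=
  {x | (a = 1 ∧
        ((∃ t : ℤ, 2 ≤ t ∧ k = n + 1 ∧
           ∀ i : Fin n, x i = if n - 2 ≤ i.val then t
             else if i.val = n - 3 then 2 else 1) ∨
         (∃ p q : ℤ, 2 ≤ p ∧ p ≤ q ∧ (p + q) ^ 2 = k - n - 1 ∧
           ∀ i : Fin n, x i = if i.val = 0 then -1 else if i.val = n - 2 then p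
             else if i.val = n - 1 then q else if i.val = n - 3 then 2 else 1))) ∨
       (a = 2 ∧
        ((∃ t : ℤ, 1 ≤ t ∧ k = n - 2 ∧
           ∀ i : Fin n, x i = if n - 2 ≤ i.val then t else 1) ∨
         (∃ p q : ℤ, 1 ≤ p ∧ p ≤ q ∧ (p + q) ^ 2 = k - n + 2 ∧
           ∀ i : Fin n, x i = if i.val = 0 then -1 else if i.val = n - 2 then p
             else if i.val = n - 1 then q else 1)))}

/-- `𝔖_{>2}(a,k,n)`. -/
def mhSgt2 (n : ℕ) (a k : ℤ) : Set (Fin n → ℤ) :=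
  {x | x ∈ mhSol n a k ∧
    (((∀ i : Fin n, i.val = 0 → 0 < x i) ∧ Monotone x ∧
      (∀ i : Fin n, i.val = n - 1 →
        2 * x i ≤ a * ∏ j ∈ Finset.univ.filter (fun j : Fin n => j.val < n - 1), x j) ∧
      2 < a * ∏ j ∈ Finset.univ.filter (fun j : Fin n => j.val < n - 2), x j) ∨
     ((∀ i : Fin n, i.val = 0 → x i < 0 ∧ ∀ j : Fin n, j.val = 1 → -x i ≤ x j) ∧
      (∀ i j : Fin n, 0 < i.val → i ≤ j → x i ≤ x j) ∧
      a * ∏ j ∈ Finset.univ.filter (fun j : Fin n => j.val < n - 2), x j < -2))}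

/-- The fundamental set `𝔖(a,k,n)`. -/
def mhS (n : ℕ) (a k : ℤ) : Set (Fin n → ℤ) :=
  (mhS0 n k ∩ mhSol n a k) ∪ mhS1 n a k ∪ mhS2 n a k ∪ mhSgt2 n a k

set_option maxHeartbeats 1000000 in
/-- the set `𝔖_{>2}(a,k,n)` is finite. -/
theorem mh_Sgt2_finite (n : ℕ) (hn : 3 ≤ n) (a k : ℤ) (ha : 0 < a) :
    (mhSgt2 n a k).Finite := by
  have hn' : (3:ℤ) ≤ (n:ℤ) := by exact_mod_cast hn
  set B : ℤ := 2*((n:ℤ)-2)*(2*(n:ℤ)-2)^2 + 2*|k| + 3 with hBdef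
  have hBnn : 0 ≤ 2*((n:ℤ)-2)*(2*(n:ℤ)-2)^2 := by
    have h1 : (0:ℤ) ≤ 2*((n:ℤ)-2) := by linarith
    have := mul_nonneg h1 (sq_nonneg (2*(n:ℤ)-2))
    linarith [this]
  apply Set.Finite.subset (Set.finite_Icc (fun _ : Fin n => -B) (fun _ => B))
  intro x hx
  suffices h : ∀ i, |x i| ≤ B by
    constructor
    · intro i; exact neg_le_of_abs_le (h i)
    · intro i; exact le_of_abs_le (h i)
  obtain ⟨heq0, hcase⟩ := hx
  have heq : ∑ i, x i ^ 2 - a * ∏ i, x i = k := heq0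
  have hn1 : n - 1 < n := by omega
  have hn2 : n - 2 < n := by omega
  set iL : Fin n := ⟨n-1, hn1⟩ with hiLdef
  set iM : Fin n := ⟨n-2, hn2⟩ with hiMdef
  set i0 : Fin n := ⟨0, by omega⟩ with hi0def
  set i1 : Fin n := ⟨1, by omega⟩ with hi1def
  have hvL : iL.val = n - 1 := rfl
  have hvM : iM.val = n - 2 := rfl
  have hv0 : i0.val = 0 := rfl
  have hv1 : i1.val = 1 := rfl
  set F1 := Finset.univ.filter (fun j : Fin n => j.val < n-1) with hF1d
  set F2 := Finset.univ.filter (fun j : Fin n => j.val < n-2) with hF2d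
  have hiL : iL ∉ F1 := by
    simp only [hF1d, Finset.mem_filter, Finset.mem_univ, true_and, hvL]
    omega
  have hiM : iM ∉ F2 := by
    simp only [hF2d, Finset.mem_filter, Finset.mem_univ, true_and, hvM]
    omega
  have huniv : (Finset.univ : Finset (Fin n)) = insert iL F1 := by
    ext j
    simp only [Finset.mem_insert, hF1d, Finset.mem_filter, Finset.mem_univ, true_and,
      Fin.ext_iff, hvL, true_iff]
    have := j.isLt; omega
  have hF1i : F1 = insert iM F2 := by
    ext j
    simp only [Finset.mem_insert, hF1d, hF2d, Finset.mem_filter, Finset.mem_univ, true_and,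
      Fin.ext_iff, hvM, true_iff]
    omega
  set y := x iM with hydef
  set z := x iL with hzdef
  set Q := ∏ j ∈ F2, x j with hQdef
  set S := ∑ j ∈ F2, x j ^ 2 with hSdef
  have hprod : ∏ i, x i = z * (y * Q) := by
    rw [huniv, Finset.prod_insert hiL, hF1i, Finset.prod_insert hiM]
  have hsum : ∑ i, x i ^ 2 = z ^ 2 + (y ^ 2 + S) := by
    rw [huniv, Finset.sum_insert hiL, hF1i, Finset.sum_insert hiM]
  have heqm : S + y*y + z*z - (a*Q)*(y*z) = k := by
    rw [hsum, hprod] at heq; ring_nf at heq ⊢; linarith [heq]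
  have hcard2 : (F2.card : ℤ) = (n : ℤ) - 2 := by
    have h1 : n = F1.card + 1 := by
      conv_lhs => rw [← Finset.card_fin n]
      rw [huniv, Finset.card_insert_of_notMem hiL]
    have h2 : F1.card = F2.card + 1 := by
      rw [hF1i, Finset.card_insert_of_notMem hiM]
    have h3 : F2.card = n - 2 := by omega
    rw [h3, Nat.cast_sub (by omega)]; norm_num
  have hknk : -|k| ≤ k := neg_abs_le k
  have hkabs : k ≤ |k| := le_abs_self k
  rcases hcase with ⟨hpos, hmono, h2z, hQ2⟩ | ⟨hneg, hmono, hQneg⟩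
  · -- positive case
    have hone : ∀ i, 1 ≤ x i := by
      intro i
      have h0 : 0 < x i0 := hpos i0 rfl
      have hle : x i0 ≤ x i := hmono (show i0 ≤ i by rw [Fin.le_def, hv0]; omega)
      omega
    have hlez : ∀ i, x i ≤ z := by
      intro i
      exact hmono (show i ≤ iL by rw [Fin.le_def, hvL]; have := i.isLt; omega)
    have hley : ∀ i ∈ F2, x i ≤ y := by
      intro i hi
      simp only [hF2d, Finset.mem_filter, Finset.mem_univ, true_and] at hi
      exact hmono (show i ≤ iM by rw [Fin.le_def, hvM]; omega)
    have hy1 : 1 ≤ y := hone iM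
    have hz1 : 1 ≤ z := hone iL
    have hz0 : (0:ℤ) ≤ z := by linarith
    have hyz : y ≤ z := hlez iM
    have hQ1 : 1 ≤ Q := by
      rw [hQdef]
      calc (1:ℤ) = ∏ _j ∈ F2, (1:ℤ) := by simp
        _ ≤ ∏ j ∈ F2, x j := Finset.prod_le_prod (by simp) (fun i _ => hone i)
    have h2z' : 2*z ≤ (a*Q)*y := by
      have h := h2z iL rfl
      rw [hF1i, Finset.prod_insert hiM] at h
      have h' : 2 * z ≤ a * (y * Q) := h
      linarith [h']
    have hA3 : 3 ≤ a*Q := hQ2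
    have hyznn : (0:ℤ) ≤ y*z := by positivity
    have hm1 : 2*(z*z) ≤ (a*Q)*(y*z) := by
      have := mul_le_mul_of_nonneg_right h2z' hz0
      linarith [this]
    have hm3 : y*y ≤ y*z := mul_le_mul_of_nonneg_left hyz (by linarith)
    have hyzB : y*z ≤ 2*((n:ℤ)-2)*(2*(n:ℤ)-2)^2 + 2*|k| := by
      rcases le_or_gt (a*Q) (2*(n:ℤ)-2) with hsmall | hbig
      · -- small A
        have hxa : ∀ i ∈ F2, x i ^ 2 ≤ (2*(n:ℤ)-2)^2 := by
          intro i hi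
          have h1 : x i ≤ Q := by
            rw [hQdef, ← Finset.mul_prod_erase F2 x hi]
            have hR : (1:ℤ) ≤ ∏ j ∈ F2.erase i, x j :=
              calc (1:ℤ) = ∏ _j ∈ F2.erase i, (1:ℤ) := by simp
                _ ≤ ∏ j ∈ F2.erase i, x j :=
                  Finset.prod_le_prod (by simp) (fun j _ => hone j)
            exact le_mul_of_one_le_right (by linarith [hone i]) hR
          have h2 : Q ≤ a*Q := le_mul_of_one_le_left (by linarith) (by linarith)
          have h3 := hone i
          have h4 : x i ≤ 2*(n:ℤ)-2 := by linarith
          have h5 : x i * x i ≤ (2*(n:ℤ)-2) * (2*(n:ℤ)-2) :=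
            mul_le_mul h4 h4 (by linarith) (by linarith)
          rw [pow_two]; linarith [h5]
        have hSb : S ≤ ((n:ℤ)-2) * (2*(n:ℤ)-2)^2 := by
          have h := Finset.sum_le_card_nsmul F2 (fun i => x i ^ 2) ((2*(n:ℤ)-2)^2) hxa
          rw [nsmul_eq_mul, hcard2] at h
          exact h
        have hm4 : 3*(y*z) ≤ (a*Q)*(y*z) := mul_le_mul_of_nonneg_right hA3 hyznn
        linarith [heqm, hSb, hm1, hm3, hm4, hknk]
      · -- big A
        have hSb : S ≤ ((n:ℤ)-2) * (y*z) := by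
          have hxb : ∀ i ∈ F2, x i ^ 2 ≤ y*z := by
            intro i hi
            have h1 := hley i hi
            have h2 := hlez i
            have h3 := hone i
            have h5 : x i * x i ≤ y * z := mul_le_mul h1 h2 (by linarith) (by linarith)
            rw [pow_two]; linarith [h5]
          have h := Finset.sum_le_card_nsmul F2 (fun i => x i ^ 2) (y*z) hxb
          rw [nsmul_eq_mul, hcard2] at h
          exact h
        have hm2 : (2*(n:ℤ)-1)*(y*z) ≤ (a*Q)*(y*z) :=
          mul_le_mul_of_nonneg_right (by linarith) hyznn
        linarith [heqm, hSb, hm1, hm2, hm3, hknk, hBnn]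
    intro i
    have h1 := hone i
    have h2 := hlez i
    have h3 : z ≤ y*z := le_mul_of_one_le_left hz0 hy1
    rw [abs_of_nonneg (by linarith : (0:ℤ) ≤ x i)]
    simp only [hBdef]; linarith
  · -- negative case
    obtain ⟨hx0neg, hx01'⟩ := hneg i0 rfl
    have hx01 : -x i0 ≤ x i1 := hx01' i1 rfl
    have h1pos : 1 ≤ x i1 := by omega
    have hgen : ∀ i : Fin n, 0 < i.val → 1 ≤ x i := by
      intro i hi
      have := hmono i1 i (by omega) (show i1 ≤ i by rw [Fin.le_def, hv1]; omega)
      omega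
    have hzmax : ∀ i : Fin n, 0 < i.val → x i ≤ z := by
      intro i hi
      exact hmono i iL hi (show i ≤ iL by rw [Fin.le_def, hvL]; have := i.isLt; omega)
    have hy1 : 1 ≤ y := hgen iM (by omega)
    have hz1 : 1 ≤ z := hgen iL (by omega)
    have hz0 : (0:ℤ) ≤ z := by linarith
    have hS0 : 0 ≤ S := Finset.sum_nonneg (fun i _ => sq_nonneg _)
    have hyznn : (0:ℤ) ≤ y*z := by positivity
    have hAm : (a*Q)*(y*z) ≤ -3*(y*z) := by
      have h1 : a*Q ≤ -3 := by linarith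
      have := mul_le_mul_of_nonneg_right h1 hyznn
      linarith [this]
    have hk3 : 3*(y*z) ≤ k := by
      have hyy : (0:ℤ) ≤ y*y := mul_self_nonneg y
      have hzz : (0:ℤ) ≤ z*z := mul_self_nonneg z
      linarith [heqm, hS0, hAm]
    have hzyz : z ≤ y*z := le_mul_of_one_le_left hz0 hy1
    have hzk : z ≤ k := by linarith
    intro i
    by_cases hi0 : i.val = 0
    · have hieq : i = i0 := Fin.ext (by omega)
      rw [hieq, abs_of_neg hx0neg]
      have hx1z : x i1 ≤ z := hzmax i1 (by omega)
      simp only [hBdef]; linarith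
    · have h1 : 1 ≤ x i := hgen i (by omega)
      have h2 : x i ≤ z := hzmax i (by omega)
      rw [abs_of_nonneg (by linarith : (0:ℤ) ≤ x i)]
      simp only [hBdef]; linarith
end
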